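/- arXiv:2603.25113 — 6 statements merged into one kernel-verified Lean document; each statement's English description precedes it below -/
import Mathlib

section
/- Every cycle C_n with n ≥ 3 and n ≠ 5 admits a (1,2,2)-packing coloring, i.e., its vertex set can be partitioned into an independent set and two sets each of which is a 2-packing (pairwise distance greater than 2). -/
open SimpleGraph

/-- `c` is an `S`-packing coloring of `G` for the sequence `s`: vertices sharing
color `i` are at distance greater than `s i`. -/
def IsPackingColoring {V : Type*} (G : SimpleGraph V) {m : ℕ} (s : Fin m → ℕ)
    (c : V → Fin m) : Prop :=
  ∀ u v : V, u ≠ v → c u = c v → G.Reachable u v → s (c u) < G.dist u v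

/-- block pattern: `0102` repeated `q` times, then `012` repeated. -/
def pk (q : ℕ) (i : ℕ) : ℕ :=
  if i < 4*q then (if i % 4 = 1 then 1 else if i % 4 = 3 then 2 else 0)
  else (if (i - 4*q) % 3 = 1 then 1 else if (i - 4*q) % 3 = 2 then 2 else 0)

lemma pk_lt (q i : ℕ) : pk q i < 3 := by unfold pk; split_ifs <;> omega

lemma pk_key0 (q r a b : ℕ) (hb : b < a) (ha : a < 4*q+3*r)
    (h : pk q a = pk q b) (h0 : pk q a = 0) :
    2 ≤ a - b ∧ a - b + 2 ≤ 4*q+3*r := by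
  unfold pk at h h0; split_ifs at h h0 <;> omega

lemma pk_key12 (q r a b : ℕ) (hb : b < a) (ha : a < 4*q+3*r)
    (h : pk q a = pk q b) (h0 : pk q a ≠ 0) :
    3 ≤ a - b ∧ a - b + 3 ≤ 4*q+3*r := by
  unfold pk at h h0; split_ifs at h h0 <;> omega

lemma fin_sub_val {n : ℕ} (u v : Fin n) :
    (u - v).val = if v.val ≤ u.val then u.val - v.val else u.val + n - v.val := by
  have hu := u.isLt; have hv := v.isLt
  rw [Fin.sub_def]; dsimp only
  split_ifs with h
  · have h2 : n - v.val + u.val = (u.val - v.val) + n := by omega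
    rw [h2, Nat.add_mod_right, Nat.mod_eq_of_lt (by omega)]
  · have h2 : n - v.val + u.val = u.val + n - v.val := by omega
    rw [h2, Nat.mod_eq_of_lt (by omega)]

lemma cycleGraph_adj_val {n : ℕ} (hn : 3 ≤ n) (u v : Fin n) :
    (cycleGraph n).Adj u v ↔ (u.val + 1 = v.val ∨ v.val + 1 = u.val ∨
      (u.val = 0 ∧ v.val = n-1) ∨ (v.val = 0 ∧ u.val = n-1)) := by
  have hu := u.isLt; have hv := v.isLt
  rw [cycleGraph_adj', fin_sub_val, fin_sub_val]
  split_ifs <;> omega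

/-- Every cycle C_n with n ≥ 3, n ≠ 5 admits a (1,2,2)-packing coloring. -/
theorem stmt_1 (n : ℕ) (hn : 3 ≤ n) (hn5 : n ≠ 5) :
    ∃ c : Fin n → Fin 3, IsPackingColoring (cycleGraph n) ![1, 2, 2] c := by
  obtain ⟨q, r, hqr⟩ : ∃ q r, n = 4*q+3*r := by
    have h4 : n % 4 = 0 ∨ n % 4 = 1 ∨ n % 4 = 2 ∨ n % 4 = 3 := by omega
    rcases h4 with h | h | h | h
    · exact ⟨n/4, 0, by omega⟩
    · exact ⟨(n-9)/4, 3, by omega⟩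
    · exact ⟨(n-6)/4, 2, by omega⟩
    · exact ⟨(n-3)/4, 1, by omega⟩
  refine ⟨fun i => ⟨pk q i.val, pk_lt q i.val⟩, ?_⟩
  have final : ∀ u v : Fin n, v.val < u.val → pk q u.val = pk q v.val →
      (cycleGraph n).Reachable u v →
      (![1,2,2] (⟨pk q u.val, pk_lt q u.val⟩ : Fin 3) : ℕ) < (cycleGraph n).dist u v := by
    intro u v hlt hpk hr
    have hu := u.isLt; have hv := v.isLt
    have hne : u ≠ v := fun h => by rw [h] at hlt; omega
    have h0 : (cycleGraph n).dist u v ≠ 0 :=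
      dist_ne_zero_iff_ne_and_reachable.mpr ⟨hne, hr⟩
    rcases eq_or_ne (pk q u.val) 0 with hc0 | hc0
    · -- color 0 : need dist > 1
      obtain ⟨hd2, hd2'⟩ := pk_key0 q r u.val v.val hlt (hqr ▸ hu) hpk hc0
      have hA : ¬ (cycleGraph n).Adj u v := by
        rw [cycleGraph_adj_val hn]; omega
      have h1 : (cycleGraph n).dist u v ≠ 1 :=
        fun h => hA (dist_eq_one_iff_adj.mp h)
      have he : (⟨pk q u.val, pk_lt q u.val⟩ : Fin 3) = 0 := Fin.ext (by simp [hc0])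
      rw [he]
      have hval : (![1,2,2] (0 : Fin 3) : ℕ) = 1 := rfl
      rw [hval]; omega
    · -- color 1 or 2 : need dist > 2
      obtain ⟨hd3, hd3'⟩ := pk_key12 q r u.val v.val hlt (hqr ▸ hu) hpk hc0
      have hA : ¬ (cycleGraph n).Adj u v := by
        rw [cycleGraph_adj_val hn]; omega
      have h1 : (cycleGraph n).dist u v ≠ 1 :=
        fun h => hA (dist_eq_one_iff_adj.mp h)
      have h2 : (cycleGraph n).dist u v ≠ 2 := by
        intro h
        obtain ⟨p, hp⟩ := exists_walk_of_dist_ne_zero h0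
        rw [h] at hp
        have hw1 : (cycleGraph n).Adj (p.getVert 0) (p.getVert 1) :=
          p.adj_getVert_succ (by omega)
        have hw2 : (cycleGraph n).Adj (p.getVert 1) (p.getVert 2) :=
          p.adj_getVert_succ (by omega)
        rw [Walk.getVert_zero] at hw1
        have hpl : p.getVert 2 = v := by
          rw [← hp]; exact p.getVert_length
        rw [hpl] at hw2
        have hx := (p.getVert 1).isLt
        rw [cycleGraph_adj_val hn] at hw1 hw2
        omega
      have hp : pk q u.val = 1 ∨ pk q u.val = 2 := by
        have := pk_lt q u.val; omega
      have hval : (![1,2,2] (⟨pk q u.val, pk_lt q u.val⟩ : Fin 3) : ℕ) = 2 := by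
        rcases hp with h | h
        · have he : (⟨pk q u.val, pk_lt q u.val⟩ : Fin 3) = 1 := Fin.ext (by simp [h])
          rw [he]; rfl
        · have he : (⟨pk q u.val, pk_lt q u.val⟩ : Fin 3) = 2 := Fin.ext (by simp [h])
          rw [he]; rfl
      rw [hval]; omega
  intro u v hne hc hr
  have hpk : pk q u.val = pk q v.val := congrArg Fin.val hc
  have hvne : u.val ≠ v.val := fun h => hne (Fin.ext h)
  show (![1,2,2] (⟨pk q u.val, pk_lt q u.val⟩ : Fin 3) : ℕ) < (cycleGraph n).dist u v
  rcases Nat.lt_or_ge u.val v.val with hlt | hge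
  · have hc' : (⟨pk q u.val, pk_lt q u.val⟩ : Fin 3) = ⟨pk q v.val, pk_lt q v.val⟩ :=
      Fin.ext hpk
    rw [hc', SimpleGraph.dist_comm]
    exact final v u hlt hpk.symm hr.symm
  · exact final u v (by omega) hpk hr
end

section
/- If a path P = v_1 v_2 ... v_n has n ≥ 3 vertices, then P admits a (1,2,2)-packing coloring in which both endpoints v_1 and v_n receive color 1 (i.e., belong to the independent-set color class). -/
open SimpleGraph

/-- The coloring scheme, as a natural number. -/
def Cfun (n i : ℕ) : ℕ :=
  if i = n - 1 then 0
  else if i = n - 2 then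
    (if n % 4 = 0 then 2 else if n % 4 = 2 then 1
     else if i % 4 = 1 then 1 else if i % 4 = 3 then 2 else 0)
  else if i % 4 = 1 then 1 else if i % 4 = 3 then 2 else 0

lemma Cfun_lt (n i : ℕ) : Cfun n i < 3 := by
  unfold Cfun; split_ifs <;> omega

set_option maxHeartbeats 1000000 in
lemma Cfun_key (n a b : ℕ) (hn : 3 ≤ n) (ha : a < n) (hb : b < n) (hab : a ≠ b)
    (h : Cfun n a = Cfun n b) :
    (Cfun n a = 0 → 2 ≤ a - b + (b - a)) ∧ (Cfun n a ≠ 0 → 3 ≤ a - b + (b - a)) := by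
  unfold Cfun at h ⊢
  split_ifs at h ⊢ <;> omega

lemma walk_len {n : ℕ} {u v : Fin n} (p : (pathGraph n).Walk u v) :
    u.val - v.val + (v.val - u.val) ≤ p.length := by
  induction p with
  | nil => simp
  | @cons a b c h q ih =>
    rw [SimpleGraph.pathGraph_adj] at h
    rw [SimpleGraph.Walk.length_cons]
    omega

/-- Every path on n ≥ 3 vertices has a (1,2,2)-packing coloring with both
endpoints in the color-1 (independent) class. -/
theorem stmt_5 (n : ℕ) (hn : 3 ≤ n) :
    ∃ c : Fin n → Fin 3, IsPackingColoring (pathGraph n) ![1, 2, 2] c ∧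
      c ⟨0, by omega⟩ = 0 ∧ c ⟨n - 1, by omega⟩ = 0 := by
  have e0 : Cfun n 0 = 0 := by
    unfold Cfun; split_ifs <;> first | omega | exact (False.elim (by assumption))
  have e1 : Cfun n (n - 1) = 0 := by
    unfold Cfun; split_ifs <;> first | omega | exact (False.elim (by assumption))
  refine ⟨fun i => ⟨Cfun n i.val, Cfun_lt n i.val⟩, ?_, ?_, ?_⟩
  · intro u v huv hc hr
    obtain ⟨p, hp⟩ := hr.exists_walk_length_eq_dist
    have hd : u.val - v.val + (v.val - u.val) ≤ (pathGraph n).dist u v := by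
      rw [← hp]; exact walk_len p
    have hC : Cfun n u.val = Cfun n v.val := congrArg Fin.val hc
    have hk := Cfun_key n u.val v.val hn u.isLt v.isLt
      (fun h => huv (Fin.ext h)) hC
    have h3 := Cfun_lt n u.val
    have hcase : Cfun n u.val = 0 ∨ Cfun n u.val = 1 ∨ Cfun n u.val = 2 := by omega
    rcases hcase with h0 | h0 | h0 <;> beta_reduce
    · have : (⟨Cfun n u.val, h3⟩ : Fin 3) = 0 := Fin.ext h0
      rw [this]
      simp only [Matrix.cons_val_zero]
      omega
    · have : (⟨Cfun n u.val, h3⟩ : Fin 3) = 1 := Fin.ext h0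
      rw [this]
      simp only [Matrix.cons_val_one, Matrix.head_cons, Matrix.cons_val_zero]
      omega
    · have : (⟨Cfun n u.val, h3⟩ : Fin 3) = 2 := Fin.ext h0
      rw [this]
      have : (![1, 2, 2] : Fin 3 → ℕ) 2 = 2 := rfl
      rw [this]
      omega
  · exact Fin.ext e0
  · exact Fin.ext e1
end

section
/- If a path P = v_1 v_2 ... v_n has n ≥ 4 vertices, then P admits a (2,2,2,2)-packing coloring such that v_1 and v_n receive the same color and no internal vertex v_2,...,v_{n-1} receives that color. -/
open SimpleGraph

lemma walk_bound {n : ℕ} {u v : Fin n} (p : (pathGraph n).Walk u v) :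
    u.val ≤ v.val + p.length ∧ v.val ≤ u.val + p.length := by
  induction p with
  | nil => simp
  | cons h p ih =>
    rw [SimpleGraph.pathGraph_adj] at h
    simp only [SimpleGraph.Walk.length_cons]
    omega

lemma dist_bound {n : ℕ} {u v : Fin n} (h : (pathGraph n).Reachable u v) :
    u.val ≤ v.val + (pathGraph n).dist u v ∧ v.val ≤ u.val + (pathGraph n).dist u v := by
  obtain ⟨p, hp⟩ := h.exists_walk_length_eq_dist
  rw [← hp]
  exact walk_bound p

/-- Every path on n ≥ 4 vertices has a (2,2,2,2)-packing coloring in which the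
two endpoints get the same color and no internal vertex gets that color. -/
theorem stmt_6 (n : ℕ) (hn : 4 ≤ n) :
    ∃ c : Fin n → Fin 4, IsPackingColoring (pathGraph n) ![2, 2, 2, 2] c ∧
      c ⟨0, by omega⟩ = c ⟨n - 1, by omega⟩ ∧
      ∀ j : Fin n, j ≠ ⟨0, by omega⟩ → j ≠ ⟨n - 1, by omega⟩ →
        c j ≠ c ⟨0, by omega⟩ := by
  have hval : ∀ i : Fin 4, (![2, 2, 2, 2] : Fin 4 → ℕ) i = 2 := by decide
  refine ⟨fun j => if j.val = 0 ∨ j.val = n - 1 then 0 else ⟨j.val % 3 + 1, by omega⟩, ?_, ?_, ?_⟩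
  · intro u v huv hc hr
    have hd := dist_bound hr
    have hne : u.val ≠ v.val := fun h => huv (Fin.ext h)
    have hub : u.val < n := u.isLt
    have hvb : v.val < n := v.isLt
    rw [hval]
    by_cases h1 : u.val = 0 ∨ u.val = n - 1 <;> by_cases h2 : v.val = 0 ∨ v.val = n - 1 <;>
        simp only [h1, h2, if_pos, if_neg, if_true, if_false] at hc
    · omega
    · exact absurd (congrArg Fin.val hc) (by simp)
    · exact absurd (congrArg Fin.val hc) (by simp)
    · have hmod : u.val % 3 + 1 = v.val % 3 + 1 := by
        have := congrArg Fin.val hc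
        simpa using this
      omega
  · simp
  · intro j hj0 hj1
    have h0 : j.val ≠ 0 := fun h => hj0 (Fin.ext h)
    have h1 : j.val ≠ n - 1 := fun h => hj1 (Fin.ext h)
    simp only [if_neg (by omega : ¬(j.val = 0 ∨ j.val = n - 1))]
    rw [if_pos (Or.inl trivial)]
    intro h
    have := congrArg Fin.val h
    simp at this
end

section
/- Let G be a 2-saturated subcubic graph, C a chordless cycle of length at least 4 in G, and x a vertex outside C that has a neighbor on C. Then x has exactly two neighbors on C, and these two neighbors are adjacent on C. -/
open SimpleGraph

/-- `G` is subcubic: every vertex has degree at most 3. -/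
def Subcubic {V : Type*} [Fintype V] (G : SimpleGraph V) [DecidableRel G.Adj] : Prop :=
  ∀ v : V, G.degree v ≤ 3

/-- `G` is `k`-saturated: every 3-vertex is adjacent to at most `k` 3-vertices. -/
def Saturated {V : Type*} [Fintype V] (G : SimpleGraph V) [DecidableRel G.Adj] (k : ℕ) : Prop :=
  ∀ v : V, G.degree v = 3 →
    ((G.neighborFinset v).filter (fun u => G.degree u = 3)).card ≤ k

lemma nbhd_eq {V : Type*} [Fintype V] [DecidableEq V] (G : SimpleGraph V) [DecidableRel G.Adj]
    {v : V} (hdeg : G.degree v ≤ 3) {a b c : V}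
    (ha : G.Adj v a) (hb : G.Adj v b) (hc : G.Adj v c)
    (hab : a ≠ b) (hac : a ≠ c) (hbc : b ≠ c) :
    G.neighborFinset v = {a, b, c} ∧ G.degree v = 3 := by
  have hsub : ({a, b, c} : Finset V) ⊆ G.neighborFinset v := by
    intro u hu
    simp only [Finset.mem_insert, Finset.mem_singleton] at hu
    rcases hu with rfl | rfl | rfl <;> simpa [SimpleGraph.mem_neighborFinset]
  have hcard : ({a, b, c} : Finset V).card = 3 := by
    rw [Finset.card_insert_of_notMem (by simp [hab, hac]),
      Finset.card_insert_of_notMem (by simp [hbc]), Finset.card_singleton]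
  have hle : (G.neighborFinset v).card ≤ ({a, b, c} : Finset V).card := by
    rw [hcard]; exact hdeg
  have heq := Finset.eq_of_subset_of_card_le hsub hle
  refine ⟨heq.symm, le_antisymm hdeg ?_⟩
  calc 3 = ({a,b,c} : Finset V).card := hcard.symm
    _ ≤ (G.neighborFinset v).card := Finset.card_le_card hsub
    _ = G.degree v := rfl

/-- In a 2-saturated subcubic graph where every 3-vertex lies on a triangle, a
vertex outside a chordless cycle of length ≥ 4 having a neighbor on the cycle
has exactly two neighbors on the cycle, and they are adjacent on the cycle. -/
theorem stmt_8 {V : Type*} [Fintype V] (G : SimpleGraph V) [DecidableRel G.Adj]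
    (hsub : Subcubic G) (hsat : Saturated G 2)
    (hgirth : ∀ v : V, G.degree v = 3 → ∃ a b : V, G.Adj v a ∧ G.Adj v b ∧ G.Adj a b)
    (n : ℕ) (hn : 4 ≤ n) (f : cycleGraph n →g G) (hf : Function.Injective f)
    (hchordless : ∀ i j : Fin n, G.Adj (f i) (f j) → (cycleGraph n).Adj i j)
    (x : V) (hx : x ∉ Set.range f) (hxC : ∃ i : Fin n, G.Adj x (f i)) :
    ∃ i j : Fin n, (cycleGraph n).Adj i j ∧
      ∀ k : Fin n, G.Adj x (f k) ↔ (k = i ∨ k = j) := by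
  classical
  obtain ⟨m, rfl⟩ : ∃ m, n = m + 4 := ⟨n - 4, by omega⟩
  -- basic Fin facts
  have hone : (1 : Fin (m+4)) ≠ 0 := by
    intro h; have h2 : (1:ℕ) = 0 := congrArg Fin.val h; simp at h2
  have htwo : (2 : Fin (m+4)) ≠ 0 := by
    intro h; have h2 : (2:ℕ) = 0 := congrArg Fin.val h; simp at h2
  have hthree : (3 : Fin (m+4)) ≠ 0 := by
    intro h; have h2 : (3:ℕ) = 0 := congrArg Fin.val h; simp at h2
  have hadj_succ : ∀ i : Fin (m+4), (cycleGraph (m+4)).Adj i (i+1) := by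
    intro i; rw [show (m+4) = (m+2)+2 by omega] at *
    rw [cycleGraph_adj]; right; open Fin.CommRing in ring
  have hadj_pred : ∀ i : Fin (m+4), (cycleGraph (m+4)).Adj i (i-1) := by
    intro i; rw [show (m+4) = (m+2)+2 by omega] at *
    rw [cycleGraph_adj]; left; open Fin.CommRing in ring
  have hne_succ : ∀ i : Fin (m+4), i ≠ i + 1 := by
    intro i h; exact hone (by open Fin.CommRing in linear_combination -h)
  have hne_pred : ∀ i : Fin (m+4), i ≠ i - 1 := by
    intro i h; exact hone (by open Fin.CommRing in linear_combination h)
  have hne_pm : ∀ i : Fin (m+4), i - 1 ≠ i + 1 := by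
    intro i h; exact htwo (by open Fin.CommRing in linear_combination -h)
  have hnochord : ∀ i : Fin (m+4), ¬ G.Adj (f (i-1)) (f (i+1)) := by
    intro i h
    have := hchordless _ _ h
    rw [show (m+4) = (m+2)+2 by omega] at *
    rw [cycleGraph_adj] at this
    rcases this with h1 | h1
    · exact hthree (by open Fin.CommRing in linear_combination -h1)
    · exact hone (by open Fin.CommRing in linear_combination h1)
  have hxne : ∀ i : Fin (m+4), x ≠ f i := fun i h => hx ⟨i, h.symm⟩
  -- degree/neighborhood of any cycle vertex adjacent to x
  have hkey : ∀ i : Fin (m+4), G.Adj x (f i) →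
      G.neighborFinset (f i) = {f (i-1), f (i+1), x} ∧ G.degree (f i) = 3 := by
    intro i hxi
    refine nbhd_eq G (hsub _) (f.map_adj (hadj_pred i))
      (f.map_adj (hadj_succ i)) hxi.symm
      (fun h => hne_pm i (hf h)) (fun h => hxne _ h.symm) (fun h => hxne _ h.symm)
  obtain ⟨i, hxi⟩ := hxC
  obtain ⟨hnb, hdeg⟩ := hkey i hxi
  -- triangle at f i
  obtain ⟨a, b, hia, hib, hab⟩ := hgirth (f i) hdeg
  have hmem : ∀ c, G.Adj (f i) c → c = f (i-1) ∨ c = f (i+1) ∨ c = x := by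
    intro c hc
    have : c ∈ G.neighborFinset (f i) := by rwa [SimpleGraph.mem_neighborFinset]
    rw [hnb] at this; simpa using this
  -- find j adjacent (in cycle) to i with G.Adj x (f j)
  have hj : ∃ j : Fin (m+4), (cycleGraph (m+4)).Adj i j ∧ G.Adj x (f j) := by
    rcases hmem a hia with rfl | rfl | rfl <;> rcases hmem b hib with rfl | rfl | rfl
    · exact absurd rfl hab.ne
    · exact absurd hab (hnochord i)
    · exact ⟨i - 1, hadj_pred i, hab.symm⟩
    · exact absurd hab.symm (hnochord i)
    · exact absurd rfl hab.ne
    · exact ⟨i + 1, hadj_succ i, hab.symm⟩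
    · exact ⟨i - 1, hadj_pred i, hab⟩
    · exact ⟨i + 1, hadj_succ i, hab⟩
    · exact absurd rfl hab.ne
  obtain ⟨j, hij, hxj⟩ := hj
  refine ⟨i, j, hij, fun k => ⟨fun hxk => ?_, fun hk => ?_⟩⟩
  · by_contra hk
    push_neg at hk
    obtain ⟨hki, hkj⟩ := hk
    have hij' : i ≠ j := hij.ne
    -- x has three distinct neighbors of degree 3
    obtain ⟨hnbx, hdegx⟩ := nbhd_eq G (hsub x) hxi hxj hxk
      (fun h => hij' (hf h)) (fun h => hki (hf h).symm) (fun h => hkj (hf h).symm)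
    have hfilter : ((G.neighborFinset x).filter (fun u => G.degree u = 3))
        = {f i, f j, f k} := by
      rw [hnbx]
      apply Finset.filter_true_of_mem
      intro u hu
      simp only [Finset.mem_insert, Finset.mem_singleton] at hu
      rcases hu with rfl | rfl | rfl
      · exact (hkey i hxi).2
      · exact (hkey j hxj).2
      · exact (hkey k hxk).2
    have hcard3 : ({f i, f j, f k} : Finset V).card = 3 := by
      rw [Finset.card_insert_of_notMem (by
          simp only [Finset.mem_insert, Finset.mem_singleton, not_or]
          exact ⟨fun h => hij' (hf h), fun h => hki (hf h).symm⟩),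
        Finset.card_insert_of_notMem (by simp only [Finset.mem_singleton]; exact fun h => hkj (hf h).symm), Finset.card_singleton]
    have := hsat x hdegx
    rw [hfilter, hcard3] at this
    omega
  · rcases hk with rfl | rfl
    · exact hxi
    · exact hxj
end

section
/- Every 2-saturated subcubic graph in which every 3-vertex lies on a triangle admits a (2,2,2,2,2)-packing coloring. -/
open SimpleGraph

set_option linter.unusedSectionVars false
set_option linter.unnecessarySimpa false
set_option maxHeartbeats 1000000

namespace PackingAux

variable {V : Type*}

/-- instance-free degree -/
noncomputable def nd (G : SimpleGraph V) (v : V) : ℕ := {u | G.Adj v u}.ncard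

def Hyp [Fintype V] (G : SimpleGraph V) : Prop :=
  (∀ v, nd G v ≤ 3) ∧
  (∀ v, nd G v = 3 → {u | G.Adj v u ∧ nd G u = 3}.ncard ≤ 2) ∧
  (∀ v, nd G v = 3 → ∃ a b : V, G.Adj v a ∧ G.Adj v b ∧ G.Adj a b)

def Good (G : SimpleGraph V) (c : V → Fin 5) : Prop :=
  ∀ u v : V, u ≠ v → c u = c v → G.Reachable u v → 2 < G.dist u v

lemma adj_or_common {G : SimpleGraph V} {u v : V} (hne : u ≠ v) (hr : G.Reachable u v)
    (h2 : G.dist u v ≤ 2) : G.Adj u v ∨ ∃ z, G.Adj u z ∧ G.Adj z v := by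
  obtain ⟨p, hp⟩ := hr.exists_walk_length_eq_dist
  rw [← hp] at h2
  clear hp hr
  cases p with
  | nil => exact absurd rfl hne
  | cons h q =>
    cases q with
    | nil => exact Or.inl h
    | cons h' r =>
      cases r with
      | nil => exact Or.inr ⟨_, h, h'⟩
      | cons h'' r' => simp [SimpleGraph.Walk.length_cons] at h2

lemma good_no_close {G : SimpleGraph V} {c : V → Fin 5} (hc : Good G c) {u v : V}
    (hne : u ≠ v) (heq : c u = c v)
    (h : G.Adj u v ∨ ∃ z, G.Adj u z ∧ G.Adj z v) : False := by
  rcases h with h | ⟨z, h1, h2⟩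
  · have hg := hc u v hne heq h.reachable
    have hd : G.dist u v ≤ 1 := by
      simpa using SimpleGraph.dist_le (SimpleGraph.Walk.cons h SimpleGraph.Walk.nil)
    omega
  · have hr : G.Reachable u v :=
      ⟨SimpleGraph.Walk.cons h1 (SimpleGraph.Walk.cons h2 SimpleGraph.Walk.nil)⟩
    have hg := hc u v hne heq hr
    have hd : G.dist u v ≤ 2 := by
      simpa using SimpleGraph.dist_le
        (SimpleGraph.Walk.cons h1 (SimpleGraph.Walk.cons h2 SimpleGraph.Walk.nil))
    omega

/-- to prove `Good`, it suffices to rule out closeness -/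
lemma good_of_no_close {G : SimpleGraph V} {c : V → Fin 5}
    (h : ∀ u v : V, u ≠ v → c u = c v →
      (G.Adj u v ∨ ∃ z, G.Adj u z ∧ G.Adj z v) → False) : Good G c := by
  intro u v hne heq hr
  by_contra hd
  push_neg at hd
  exact h u v hne heq (adj_or_common hne hr hd)

lemma exists_color (s : Finset (Fin 5)) (h : s.card ≤ 4) : ∃ i, i ∉ s := by
  by_contra hcon
  push_neg at hcon
  have hsub : (Finset.univ : Finset (Fin 5)) ⊆ s := fun i _ => hcon i
  have := Finset.card_le_card hsub
  simp at this
  omega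


section Helpers

variable [Fintype V] {G : SimpleGraph V}

lemma nd_eq_two {v : V} (h : nd G v = 2) :
    ∃ x y : V, x ≠ y ∧ {u | G.Adj v u} = {x, y} := by
  obtain ⟨x, y, hxy, hs⟩ := Set.ncard_eq_two.mp h
  exact ⟨x, y, hxy, hs⟩

lemma nd_eq_three {v : V} (h : nd G v = 3) :
    ∃ x y z : V, x ≠ y ∧ x ≠ z ∧ y ≠ z ∧ {u | G.Adj v u} = {x, y, z} := by
  exact Set.ncard_eq_three.mp h

lemma subset_single {s : Set V} (a : V) (h : s.ncard ≤ 1) : ∃ r, s ⊆ {r} := by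
  rcases s.eq_empty_or_nonempty with he | ⟨u, hu⟩
  · exact ⟨a, by simp [he]⟩
  · refine ⟨u, fun w hw => ?_⟩
    have := (Set.ncard_le_one (Set.toFinite s)).mp h w hw u hu
    simp [this]

lemma subset_pair {s : Set V} (a : V) (h : s.ncard ≤ 2) : ∃ r t, s ⊆ {r, t} := by
  rcases s.eq_empty_or_nonempty with he | ⟨u, hu⟩
  · exact ⟨a, a, by simp [he]⟩
  · obtain ⟨r, hr⟩ := subset_single a (s := s \ {u}) (by
      have hd : (s \ {u}).ncard = s.ncard - 1 := Set.ncard_diff_singleton_of_mem hu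
      omega)
    refine ⟨u, r, fun w hw => ?_⟩
    by_cases hwu : w = u
    · simp [hwu]
    · have : w ∈ s \ {u} := ⟨hw, hwu⟩
      have := hr this
      simp_all

/-- the neighbors of `x` besides two known neighbors `p ≠ q` form at most a singleton -/
lemma diff_pair_subset {x p q : V} (hnd : nd G x ≤ 3) (hp : G.Adj x p) (hq : G.Adj x q)
    (hpq : p ≠ q) : ∃ r : V, {u | G.Adj x u} ⊆ {p, q, r} := by
  have hsub : ({p, q} : Set V) ⊆ {u | G.Adj x u} := by
    rintro z (rfl | rfl) <;> simpa [hp, hq]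
  have hd : ({u | G.Adj x u} \ {p, q}).ncard = nd G x - 2 := by
    rw [Set.ncard_diff hsub (Set.toFinite _), Set.ncard_pair hpq]
    rfl
  obtain ⟨r, hr⟩ := subset_single x (s := {u | G.Adj x u} \ {p, q}) (by omega)
  refine ⟨r, fun w hw => ?_⟩
  by_cases hwp : w = p
  · simp [hwp]
  by_cases hwq : w = q
  · simp [hwq]
  have : w ∈ {u | G.Adj x u} \ {p, q} := ⟨hw, by simp [hwp, hwq]⟩
  have := hr this
  simp_all

/-- the neighbors of `x` besides one known neighbor `p` form at most a pair -/
lemma diff_single_subset {x p : V} (hnd : nd G x ≤ 3) (hp : G.Adj x p) :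
    ∃ r t : V, {u | G.Adj x u} ⊆ {p, r, t} := by
  have hsub : ({p} : Set V) ⊆ {u | G.Adj x u} := by rintro z rfl; simpa [hp]
  have hd : ({u | G.Adj x u} \ {p}).ncard = nd G x - 1 := by
    rw [Set.ncard_diff hsub (Set.toFinite _), Set.ncard_singleton]
    rfl
  obtain ⟨r, t, hrt⟩ := subset_pair x (s := {u | G.Adj x u} \ {p}) (by omega)
  refine ⟨r, t, fun w hw => ?_⟩
  by_cases hwp : w = p
  · simp [hwp]
  have : w ∈ {u | G.Adj x u} \ {p} := ⟨hw, by simp [hwp]⟩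
  have := hrt this
  simp_all

end Helpers

lemma nd_def (G : SimpleGraph V) (v : V) : nd G v = {u | G.Adj v u}.ncard := rfl

section Del

variable [Fintype V] [DecidableEq V]

/-- vertex deletion graph -/
def del (G : SimpleGraph V) (v : V) : SimpleGraph {u : V // u ≠ v} where
  Adj a b := G.Adj a b
  symm := ⟨fun a b h => h.symm⟩
  loopless := ⟨fun a h => G.loopless.irrefl _ h⟩

lemma del_adj {G : SimpleGraph V} {v : V} {a b : {u : V // u ≠ v}} :
    (del G v).Adj a b ↔ G.Adj a b := Iff.rfl

lemma val_image_setOf {v : V} (P : V → Prop) :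
    Subtype.val '' {b : {u : V // u ≠ v} | P b.val} = {u | P u} \ {v} := by
  ext u
  constructor
  · rintro ⟨⟨w, hw⟩, hP, rfl⟩
    exact ⟨hP, hw⟩
  · rintro ⟨hP, hne⟩
    exact ⟨⟨u, hne⟩, hP, rfl⟩

lemma ncard_subtype {v : V} (P : V → Prop) :
    {b : {u : V // u ≠ v} | P b.val}.ncard = ({u | P u} \ {v}).ncard := by
  rw [← val_image_setOf (v := v) P, Set.ncard_image_of_injective _ Subtype.val_injective]

lemma del_nd {G : SimpleGraph V} {v : V} (a : {u : V // u ≠ v}) :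
    nd (del G v) a = ({u | G.Adj a.val u} \ {v}).ncard := by
  rw [nd]
  exact ncard_subtype _

lemma del_nd_le {G : SimpleGraph V} {v : V} (a : {u : V // u ≠ v}) :
    nd (del G v) a ≤ nd G a.val := by
  rw [del_nd]
  exact Set.ncard_le_ncard Set.diff_subset (Set.toFinite _)

lemma del_nd_three {G : SimpleGraph V} {v : V} (a : {u : V // u ≠ v})
    (hG : nd G a.val ≤ 3) (h : nd (del G v) a = 3) :
    nd G a.val = 3 ∧ ¬ G.Adj a.val v := by
  rw [del_nd] at h
  rw [nd_def] at hG ⊢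
  by_cases hm : v ∈ {u | G.Adj a.val u}
  · have := Set.ncard_diff_singleton_of_mem hm
    omega
  · rw [Set.diff_singleton_eq_self hm] at h
    exact ⟨h, hm⟩

lemma del_hyp {G : SimpleGraph V} (hyp : Hyp G) (v : V) : Hyp (del G v) := by
  obtain ⟨hsub, hsat, hgir⟩ := hyp
  refine ⟨fun a => le_trans (del_nd_le a) (hsub _), fun a ha => ?_, fun a ha => ?_⟩
  · obtain ⟨ha3, hav⟩ := del_nd_three a (hsub _) ha
    have himg : {b : {u : V // u ≠ v} | (del G v).Adj a b ∧ nd (del G v) b = 3}.ncard ≤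
        ({u | G.Adj a.val u ∧ nd G u = 3} : Set V).ncard := by
      have : {b : {u : V // u ≠ v} | (del G v).Adj a b ∧ nd (del G v) b = 3}.ncard =
          (Subtype.val '' {b : {u : V // u ≠ v} | (del G v).Adj a b ∧ nd (del G v) b = 3}).ncard :=
        (Set.ncard_image_of_injective _ Subtype.val_injective).symm
      rw [this]
      apply Set.ncard_le_ncard _ (Set.toFinite _)
      rintro u ⟨⟨w, hw⟩, ⟨hadj, hnd3⟩, rfl⟩
      exact ⟨hadj, (del_nd_three _ (hsub _) hnd3).1⟩
    exact le_trans himg (hsat _ ha3)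
  · obtain ⟨ha3, hav⟩ := del_nd_three a (hsub _) ha
    obtain ⟨p, q, hp, hq, hpq⟩ := hgir a.val ha3
    have hpv : p ≠ v := fun h => hav (h ▸ hp)
    have hqv : q ≠ v := fun h => hav (h ▸ hq)
    exact ⟨⟨p, hpv⟩, ⟨q, hqv⟩, hp, hq, hpq⟩

lemma card_del (v : V) : Fintype.card {u : V // u ≠ v} < Fintype.card V :=
  Fintype.card_subtype_lt (x := v) (by simp)

end Del

section Extend

variable [Fintype V] [DecidableEq V] {G : SimpleGraph V} {v : V}

/-- generic extension lemma: given a good coloring of a graph `G'` on `V - v` that contains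
all `G`-edges, a small set `K` of colors capturing everything near `v`, and the property that
`G`-neighbors of `v` stay close in `G'`, we can extend to a good coloring of `G`. -/
lemma extend (G' : SimpleGraph {u : V // u ≠ v})
    (hGG' : ∀ a b : {u : V // u ≠ v}, G.Adj a.val b.val → G'.Adj a b)
    (c' : {u : V // u ≠ v} → Fin 5) (hgood : Good G' c')
    (K : Finset (Fin 5)) (hK : K.card ≤ 4)
    (hnb : ∀ (u : V) (h : u ≠ v), (G.Adj v u ∨ ∃ z, G.Adj v z ∧ G.Adj z u) → c' ⟨u, h⟩ ∈ K)
    (hpair : ∀ (p q : V) (hp : p ≠ v) (hq : q ≠ v), p ≠ q → G.Adj v p → G.Adj v q →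
      G'.Adj ⟨p, hp⟩ ⟨q, hq⟩ ∨ ∃ z, G'.Adj ⟨p, hp⟩ z ∧ G'.Adj z ⟨q, hq⟩) :
    ∃ c : V → Fin 5, Good G c := by
  obtain ⟨cv, hcv⟩ := exists_color K hK
  refine ⟨fun u => if h : u = v then cv else c' ⟨u, h⟩, good_of_no_close ?_⟩
  intro u w hne heq hclose
  by_cases hu : u = v
  · subst hu
    have hw : w ≠ u := fun h => hne h.symm
    rw [dif_pos rfl, dif_neg hw] at heq
    exact hcv (heq ▸ hnb w hw hclose)
  · by_cases hwv : w = v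
    · subst hwv
      rw [dif_neg hu, dif_pos rfl] at heq
      have hclose' : G.Adj w u ∨ ∃ z, G.Adj w z ∧ G.Adj z u := by
        rcases hclose with h | ⟨z, h1, h2⟩
        · exact Or.inl h.symm
        · exact Or.inr ⟨z, h2.symm, h1.symm⟩
      exact hcv (heq ▸ hnb u hu hclose')
    · rw [dif_neg hu, dif_neg hwv] at heq
      have hne' : (⟨u, hu⟩ : {a : V // a ≠ v}) ≠ ⟨w, hwv⟩ := by
        intro h
        exact hne (congrArg Subtype.val h)
      rcases hclose with h | ⟨z, h1, h2⟩
      · exact good_no_close hgood hne' heq (Or.inl (hGG' _ _ h))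
      · by_cases hz : z = v
        · subst hz
          exact good_no_close hgood hne' heq (hpair u w hu hwv hne h1.symm h2)
        · exact good_no_close hgood hne' heq (Or.inr ⟨⟨z, hz⟩, hGG' _ _ h1, hGG' _ _ h2⟩)

/-- a color-reading helper on `V` -/
noncomputable def cc (v : V) (c' : {u : V // u ≠ v} → Fin 5) (u : V) : Fin 5 :=
  if h : u = v then 0 else c' ⟨u, h⟩

lemma cc_eq (v : V) (c' : {u : V // u ≠ v} → Fin 5) (u : V) (h : u ≠ v) :
    c' ⟨u, h⟩ = cc v c' u := by
  rw [cc, dif_neg h]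

lemma card3 (a b c : Fin 5) : ({a, b, c} : Finset (Fin 5)).card ≤ 3 := by
  apply (Finset.card_insert_le _ _).trans
  apply Nat.succ_le_succ
  apply (Finset.card_insert_le _ _).trans
  simp

lemma card4 (a b c d : Fin 5) : ({a, b, c, d} : Finset (Fin 5)).card ≤ 4 := by
  apply (Finset.card_insert_le _ _).trans
  exact Nat.succ_le_succ (card3 b c d)

/-- Reduction 1: a vertex of degree ≤ 1. -/
lemma red1 (hyp : Hyp G) {v : V} (hv : nd G v ≤ 1)
    (prev : ∃ c', Good (del G v) c') : ∃ c : V → Fin 5, Good G c := by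
  obtain ⟨c', hgood⟩ := prev
  obtain ⟨x0, hx0⟩ := subset_single v (s := {u | G.Adj v u}) hv
  have hGG' : ∀ a b : {u : V // u ≠ v}, G.Adj a.val b.val → (del G v).Adj a b := fun a b h => h
  by_cases hex : G.Adj v x0
  · obtain ⟨r, t, hrt⟩ := diff_single_subset (x := x0) (p := v) (hyp.1 x0) hex.symm
    refine extend (del G v) hGG' c' hgood {cc v c' x0, cc v c' r, cc v c' t}
      ((card3 _ _ _).trans (by norm_num)) ?_ ?_
    · intro u h hclose
      rcases hclose with hadj | ⟨z, hz1, hz2⟩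
      · have : u = x0 := hx0 hadj
        subst this
        rw [cc_eq v c' u h]
        simp
      · have hzx : z = x0 := hx0 hz1
        subst hzx
        have := hrt hz2
        rcases this with h1 | h1 | h1
        · exact absurd h1 h
        · subst h1; rw [cc_eq v c' u h]; simp
        · subst h1; rw [cc_eq v c' u h]; simp
    · intro p q hp hq hpq hvp hvq
      have hpx : p = x0 := hx0 hvp
      have hqx : q = x0 := hx0 hvq
      exact absurd (hpx.trans hqx.symm) hpq
  · refine extend (del G v) hGG' c' hgood ∅ (by simp) ?_ ?_
    · intro u h hclose
      rcases hclose with hadj | ⟨z, hz1, hz2⟩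
      · exact absurd (hx0 hadj : u = x0) (fun hh => hex (hh ▸ hadj))
      · exact absurd (hx0 hz1 : z = x0) (fun hh => hex (hh ▸ hz1))
    · intro p q hp hq hpq hvp hvq
      exact absurd (hx0 hvp : p = x0) (fun hh => hex (hh ▸ hvp))

/-- neighbors of a degree-2 vertex are exactly the two known ones -/
lemma nbrs_eq_pair {v x y : V} (hnd : nd G v = 2) (hvx : G.Adj v x) (hvy : G.Adj v y)
    (hxy : x ≠ y) : {u | G.Adj v u} = {x, y} := by
  have hsub : ({x, y} : Set V) ⊆ {u | G.Adj v u} := by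
    rintro z (rfl | rfl) <;> simpa [hvx, hvy]
  refine (Set.eq_of_subset_of_ncard_le hsub ?_ (Set.toFinite _)).symm
  rw [← nd_def, hnd, Set.ncard_pair hxy]

/-- Reduction 2a: a degree-2 vertex with adjacent neighbors. -/
lemma red2a (hyp : Hyp G) {v x y : V} (hnd : nd G v = 2) (hvx : G.Adj v x) (hvy : G.Adj v y)
    (hxy : x ≠ y) (hadj : G.Adj x y)
    (prev : ∃ c', Good (del G v) c') : ∃ c : V → Fin 5, Good G c := by
  obtain ⟨c', hgood⟩ := prev
  have hGG' : ∀ a b : {u : V // u ≠ v}, G.Adj a.val b.val → (del G v).Adj a b := fun a b h => h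
  have hNv : {u | G.Adj v u} = {x, y} := nbrs_eq_pair hnd hvx hvy hxy
  obtain ⟨r, hr⟩ := diff_pair_subset (x := x) (p := v) (q := y) (hyp.1 x) hvx.symm hadj
    (G.ne_of_adj hvy)
  obtain ⟨t, ht⟩ := diff_pair_subset (x := y) (p := v) (q := x) (hyp.1 y) hvy.symm hadj.symm
    (G.ne_of_adj hvx)
  refine extend (del G v) hGG' c' hgood {cc v c' x, cc v c' y, cc v c' r, cc v c' t}
    (card4 _ _ _ _) ?_ ?_
  · intro u h hclose
    rw [cc_eq v c' u h]
    rcases hclose with hadjvu | ⟨z, hz1, hz2⟩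
    · have : u ∈ ({x, y} : Set V) := hNv ▸ hadjvu
      rcases this with h1 | h1 <;> (subst h1; simp)
    · have hzm : z ∈ ({x, y} : Set V) := hNv ▸ hz1
      rcases hzm with h1 | h1
      · subst h1
        have := hr hz2
        rcases this with h2 | h2 | h2
        · exact absurd h2 h
        · subst h2; simp
        · subst h2; simp
      · subst h1
        have := ht hz2
        rcases this with h2 | h2 | h2
        · exact absurd h2 h
        · subst h2; simp
        · subst h2; simp
  · intro p q hp hq hpq hvp hvq
    have hpm : p ∈ ({x, y} : Set V) := hNv ▸ hvp
    have hqm : q ∈ ({x, y} : Set V) := hNv ▸ hvq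
    left
    show G.Adj p q
    rcases hpm with h1 | h1 <;> rcases hqm with h2 | h2 <;> subst h1 <;> subst h2
    · exact absurd rfl hpq
    · exact hadj
    · exact hadj.symm
    · exact absurd rfl hpq

/-- suppression graph: delete `v`, add edge `xy` -/
def supp (G : SimpleGraph V) (v x y : V) : SimpleGraph {u : V // u ≠ v} where
  Adj a b := (G.Adj a.val b.val ∨ (a.val = x ∧ b.val = y) ∨ (a.val = y ∧ b.val = x)) ∧ a ≠ b
  symm := ⟨fun a b h => by
    obtain ⟨h1, h2⟩ := h
    refine ⟨?_, fun hh => h2 hh.symm⟩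
    rcases h1 with h1 | h1 | h1
    · exact Or.inl h1.symm
    · exact Or.inr (Or.inr ⟨h1.2, h1.1⟩)
    · exact Or.inr (Or.inl ⟨h1.2, h1.1⟩)⟩
  loopless := ⟨fun a h => h.2 rfl⟩

lemma supp_comm (v x y : V) : supp G v x y = supp G v y x := by
  ext a b
  show (_ ∨ _ ∨ _) ∧ _ ↔ (_ ∨ _ ∨ _) ∧ _
  tauto

lemma supp_adj_pair {v x y : V} (hx : x ≠ v) (hy : y ≠ v) (hxy : x ≠ y) :
    (supp G v x y).Adj ⟨x, hx⟩ ⟨y, hy⟩ :=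
  ⟨Or.inr (Or.inl ⟨rfl, rfl⟩), fun h => hxy (congrArg Subtype.val h)⟩

lemma supp_adj_of_G {v x y : V} {a b : {u : V // u ≠ v}} (h : G.Adj a.val b.val) :
    (supp G v x y).Adj a b :=
  ⟨Or.inl h, fun hh => G.ne_of_adj h (congrArg Subtype.val hh)⟩

section Supp

variable {v x y : V} (hndv : nd G v = 2) (hvx : G.Adj v x) (hvy : G.Adj v y)
  (hxy : x ≠ y) (hnxy : ¬ G.Adj x y) (hndx : nd G x = 2) (hndy : nd G y = 2)

include hndv hvx hvy hxy hnxy hndx hndy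

lemma supp_nd_x (a : {u : V // u ≠ v}) (hax : a.val = x) :
    nd (supp G v x y) a = 2 := by
  have hset : {b : {u : V // u ≠ v} | (supp G v x y).Adj a b} =
      {b : {u : V // u ≠ v} | G.Adj x b.val ∨ b.val = y} := by
    ext b
    simp only [Set.mem_setOf_eq]
    constructor
    · rintro ⟨h1 | h1 | h1, h2⟩
      · exact Or.inl (hax ▸ h1)
      · exact Or.inr h1.2
      · exact absurd (hax ▸ h1.1 : x = y) hxy
    · rintro (h | h)
      · refine ⟨Or.inl (hax ▸ h), fun hh => ?_⟩
        have hvv : a.val = b.val := congrArg Subtype.val hh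
        rw [hax] at hvv
        exact G.ne_of_adj h hvv
      · refine ⟨Or.inr (Or.inl ⟨hax, h⟩), fun hh => ?_⟩
        have : a.val = b.val := congrArg Subtype.val hh
        rw [hax, h] at this
        exact hxy this
  rw [nd_def, hset, ncard_subtype (fun u => G.Adj x u ∨ u = y)]
  have : {u : V | G.Adj x u ∨ u = y} = insert y {u | G.Adj x u} := by
    ext u; simp [or_comm]
  rw [this]
  have hyv : y ≠ v := (G.ne_of_adj hvy).symm
  rw [Set.insert_diff_of_notMem _ (by simp [hyv])]
  have hynx : y ∉ {u : V | G.Adj x u} \ {v} := fun hm => hnxy hm.1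
  rw [Set.ncard_insert_of_notMem hynx (Set.toFinite _)]
  have hvmem : v ∈ {u : V | G.Adj x u} := hvx.symm
  rw [Set.ncard_diff_singleton_of_mem hvmem]
  rw [← nd_def, hndx]

lemma supp_nd_other (a : {u : V // u ≠ v}) (hax : a.val ≠ x) (hay : a.val ≠ y) :
    nd (supp G v x y) a = nd G a.val := by
  have hset : {b : {u : V // u ≠ v} | (supp G v x y).Adj a b} =
      {b : {u : V // u ≠ v} | G.Adj a.val b.val} := by
    ext b
    simp only [Set.mem_setOf_eq]
    constructor
    · rintro ⟨h1 | h1 | h1, h2⟩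
      · exact h1
      · exact absurd h1.1 hax
      · exact absurd h1.1 hay
    · intro h
      exact ⟨Or.inl h, fun hh => G.ne_of_adj h (congrArg Subtype.val hh)⟩
  rw [nd_def, hset, ncard_subtype (fun u => G.Adj a.val u)]
  have hNv : {u | G.Adj v u} = {x, y} := nbrs_eq_pair hndv hvx hvy hxy
  have hvnm : v ∉ {u : V | G.Adj a.val u} := by
    intro hm
    have : a.val ∈ {u | G.Adj v u} := (hm : G.Adj a.val v).symm
    rw [hNv] at this
    rcases this with h | h
    · exact hax h
    · exact hay h
  rw [Set.diff_singleton_eq_self hvnm, ← nd_def]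

lemma supp_nd (a : {u : V // u ≠ v}) : nd (supp G v x y) a = nd G a.val := by
  by_cases hax : a.val = x
  · rw [supp_nd_x hndv hvx hvy hxy hnxy hndx hndy a hax, hax, hndx]
  by_cases hay : a.val = y
  · rw [supp_comm (G := G) v x y]
    rw [supp_nd_x hndv hvy hvx (Ne.symm hxy) (fun h => hnxy h.symm) hndy hndx a hay, hay, hndy]
  · exact supp_nd_other hndv hvx hvy hxy hnxy hndx hndy a hax hay

lemma supp_hyp (hyp : Hyp G) : Hyp (supp G v x y) := by
  obtain ⟨hsub, hsat, hgir⟩ := hyp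
  have hnd := supp_nd hndv hvx hvy hxy hnxy hndx hndy
  have hNv : {u | G.Adj v u} = {x, y} := nbrs_eq_pair hndv hvx hvy hxy
  refine ⟨fun a => (hnd a) ▸ hsub a.val, fun a ha => ?_, fun a ha => ?_⟩
  · rw [hnd a] at ha
    have hax : a.val ≠ x := fun h => by rw [h, hndx] at ha; omega
    have hay : a.val ≠ y := fun h => by rw [h, hndy] at ha; omega
    have hset : {b : {u : V // u ≠ v} | (supp G v x y).Adj a b ∧ nd (supp G v x y) b = 3} =
        {b : {u : V // u ≠ v} | G.Adj a.val b.val ∧ nd G b.val = 3} := by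
      ext b
      simp only [Set.mem_setOf_eq, hnd b]
      constructor
      · rintro ⟨⟨h1 | h1 | h1, h2⟩, h3⟩
        · exact ⟨h1, h3⟩
        · exact absurd h1.1 hax
        · exact absurd h1.1 hay
      · rintro ⟨h1, h3⟩
        exact ⟨⟨Or.inl h1, fun hh => G.ne_of_adj h1 (congrArg Subtype.val hh)⟩, h3⟩
    rw [hset, ncard_subtype (fun u => G.Adj a.val u ∧ nd G u = 3)]
    refine le_trans (Set.ncard_le_ncard Set.diff_subset (Set.toFinite _)) (hsat a.val ha)
  · rw [hnd a] at ha
    obtain ⟨p, q, hp, hq, hpq⟩ := hgir a.val ha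
    have hvnm : ¬ G.Adj a.val v := by
      intro hm
      have : a.val ∈ {u | G.Adj v u} := hm.symm
      rw [hNv] at this
      rcases this with h | h
      · rw [h, hndx] at ha; omega
      · rw [h, hndy] at ha; omega
    have hpv : p ≠ v := fun h => hvnm (h ▸ hp)
    have hqv : q ≠ v := fun h => hvnm (h ▸ hq)
    exact ⟨⟨p, hpv⟩, ⟨q, hqv⟩, supp_adj_of_G hp, supp_adj_of_G hq, supp_adj_of_G hpq⟩

/-- Reduction 2b: a degree-2 vertex with two nonadjacent degree-2 neighbors: suppress. -/
lemma red2b (prev : ∃ c', Good (supp G v x y) c') : ∃ c : V → Fin 5, Good G c := by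
  obtain ⟨c', hgood⟩ := prev
  have hNv : {u | G.Adj v u} = {x, y} := nbrs_eq_pair hndv hvx hvy hxy
  obtain ⟨r, hrs⟩ := subset_single v (s := {u : V | G.Adj x u} \ {v}) (by
    have : v ∈ {u : V | G.Adj x u} := hvx.symm
    rw [Set.ncard_diff_singleton_of_mem this, ← nd_def, hndx])
  obtain ⟨t, hts⟩ := subset_single v (s := {u : V | G.Adj y u} \ {v}) (by
    have : v ∈ {u : V | G.Adj y u} := hvy.symm
    rw [Set.ncard_diff_singleton_of_mem this, ← nd_def, hndy])
  refine extend (supp G v x y) (fun a b h => supp_adj_of_G h) c' hgood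
    {cc v c' x, cc v c' y, cc v c' r, cc v c' t} (card4 _ _ _ _) ?_ ?_
  · intro u h hclose
    rw [cc_eq v c' u h]
    rcases hclose with hadjvu | ⟨z, hz1, hz2⟩
    · have : u ∈ ({x, y} : Set V) := hNv ▸ hadjvu
      rcases this with h1 | h1 <;> (subst h1; simp)
    · have hzm : z ∈ ({x, y} : Set V) := hNv ▸ hz1
      rcases hzm with h1 | h1
      · subst h1
        have : u ∈ ({r} : Set V) := hrs ⟨hz2, h⟩
        rw [this]
        simp
      · subst h1
        have : u ∈ ({t} : Set V) := hts ⟨hz2, h⟩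
        rw [this]
        simp
  · intro p q hp hq hpq hvp hvq
    have hpm : p ∈ ({x, y} : Set V) := hNv ▸ hvp
    have hqm : q ∈ ({x, y} : Set V) := hNv ▸ hvq
    left
    rcases hpm with h1 | h1 <;> rcases hqm with h2 | h2 <;> subst h1 <;> subst h2
    · exact absurd rfl hpq
    · exact supp_adj_pair hp hq hxy
    · exact (supp_adj_pair hq hp hxy).symm
    · exact absurd rfl hpq

end Supp

end Extend

section Clean

variable [Fintype V] [DecidableEq V] {G : SimpleGraph V}
  (hyp : Hyp G)
  (R1 : ∀ u : V, 2 ≤ nd G u)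
  (R2a : ∀ u p q : V, G.Adj u p → G.Adj u q → p ≠ q → nd G u = 2 → ¬ G.Adj p q)
  (R2b : ∀ u p q : V, G.Adj u p → G.Adj u q → p ≠ q → nd G u = 2 → nd G p = 3 ∨ nd G q = 3)

include hyp R1 R2a R2b

set_option linter.omit false

lemma CL1 (u : V) : nd G u = 2 ∨ nd G u = 3 := by
  have h1 := hyp.1 u
  have h2 := R1 u
  omega

/-- structure of a black vertex: two black mates forming a triangle and one white neighbor -/
lemma LB {x : V} (hx : nd G x = 3) : ∃ a b c : V,
    G.Adj x a ∧ G.Adj x b ∧ G.Adj x c ∧ G.Adj a b ∧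
    nd G a = 3 ∧ nd G b = 3 ∧ nd G c = 2 ∧ c ∉ ({a, b} : Set V) ∧
    ¬ G.Adj a c ∧ ¬ G.Adj b c ∧
    {u | G.Adj x u} = {a, b, c} := by
  obtain ⟨a, b, hxa, hxb, hab⟩ := hyp.2.2 x hx
  have hnab : a ≠ b := G.ne_of_adj hab
  have hsub : ({a, b} : Set V) ⊆ {u | G.Adj x u} := by
    rintro z (rfl | rfl) <;> simpa [hxa, hxb]
  have hdc : ({u | G.Adj x u} \ {a, b}).ncard = 1 := by
    rw [Set.ncard_diff hsub (Set.toFinite _), Set.ncard_pair hnab, ← nd_def, hx]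
  obtain ⟨c, hc⟩ := Set.ncard_eq_one.mp hdc
  have hcm : c ∈ {u | G.Adj x u} \ ({a, b} : Set V) := by rw [hc]; rfl
  have hxc : G.Adj x c := hcm.1
  have hcnab : c ∉ ({a, b} : Set V) := hcm.2
  have hNx : {u | G.Adj x u} = {a, b, c} := by
    ext u
    constructor
    · intro hu
      by_cases hm : u ∈ ({a, b} : Set V)
      · rcases hm with h | h
        · exact Or.inl h
        · exact Or.inr (Or.inl h)
      · have : u ∈ {u | G.Adj x u} \ ({a, b} : Set V) := ⟨hu, hm⟩
        rw [hc] at this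
        exact Or.inr (Or.inr this)
    · rintro (rfl | rfl | rfl)
      · exact hxa
      · exact hxb
      · exact hxc
  have hxa' : x ≠ a := G.ne_of_adj hxa
  have hxb' : x ≠ b := G.ne_of_adj hxb
  have ha3 : nd G a = 3 := by
    rcases CL1 hyp R1 R2a R2b a with h2 | h3
    · exact absurd hxb (R2a a x b hxa.symm hab hxb' h2)
    · exact h3
  have hb3 : nd G b = 3 := by
    rcases CL1 hyp R1 R2a R2b b with h2 | h3
    · exact absurd hxa (R2a b x a hxb.symm hab.symm hxa' h2)
    · exact h3
  have hc2 : nd G c = 2 := by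
    rcases CL1 hyp R1 R2a R2b c with h2 | h3
    · exact h2
    · exfalso
      have hsat := hyp.2.1 x hx
      have hsub3 : ({a, b, c} : Set V) ⊆ {u | G.Adj x u ∧ nd G u = 3} := by
        rintro z (rfl | rfl | rfl)
        · exact ⟨hxa, ha3⟩
        · exact ⟨hxb, hb3⟩
        · exact ⟨hxc, h3⟩
      have h33 : ({a, b, c} : Set V).ncard = 3 := by
        have hca : c ≠ a := fun h => hcnab (by simp [h])
        have hcb : c ≠ b := fun h => hcnab (by simp [h])
        rw [show ({a, b, c} : Set V) = {c, a, b} by ext u; simp; tauto]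
        rw [Set.ncard_insert_of_notMem (by simp [hca, hcb]) (Set.toFinite _)]
        rw [Set.ncard_pair hnab]
      have := Set.ncard_le_ncard hsub3 (Set.toFinite _)
      omega
  have hac : ¬ G.Adj a c := by
    intro hadj
    exact (R2a c x a hxc.symm hadj.symm hxa' hc2) hxa
  have hbc : ¬ G.Adj b c := by
    intro hadj
    exact (R2a c x b hxc.symm hadj.symm hxb' hc2) hxb
  exact ⟨a, b, c, hxa, hxb, hxc, hab, ha3, hb3, hc2, hcnab, hac, hbc, hNx⟩

/-- a black vertex has a unique white neighbor -/
lemma white_nbr_unique {x z1 z2 : V} (hx : nd G x = 3) (h1 : G.Adj x z1) (h2 : G.Adj x z2)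
    (hz1 : nd G z1 = 2) (hz2 : nd G z2 = 2) : z1 = z2 := by
  obtain ⟨a, b, c, _, _, _, _, ha3, hb3, _, _, _, _, hNx⟩ := LB hyp R1 R2a R2b hx
  have hm1 : z1 ∈ ({a, b, c} : Set V) := hNx ▸ h1
  have hm2 : z2 ∈ ({a, b, c} : Set V) := hNx ▸ h2
  have e1 : z1 = c := by
    rcases hm1 with h | h | h
    · rw [h] at hz1; omega
    · rw [h] at hz1; omega
    · exact h
  have e2 : z2 = c := by
    rcases hm2 with h | h | h
    · rw [h] at hz2; omega
    · rw [h] at hz2; omega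
    · exact h
  rw [e1, e2]

/-- the black neighbors of a black vertex are exactly its two mates -/
lemma black_nbrs_pair {p q r : V} (hp : nd G p = 3) (hq : nd G q = 3) (hr : nd G r = 3)
    (hpq : G.Adj p q) (hpr : G.Adj p r) (hqr : q ≠ r) :
    ∀ u, G.Adj p u → nd G u = 3 → u = q ∨ u = r := by
  obtain ⟨a, b, c, _, _, _, _, ha3, hb3, hc2, _, _, _, hNx⟩ := LB hyp R1 R2a R2b hp
  have hmem : ∀ w, G.Adj p w → nd G w = 3 → w = a ∨ w = b := by
    intro w hw hw3
    have : w ∈ ({a, b, c} : Set V) := hNx ▸ hw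
    rcases this with h | h | h
    · exact Or.inl h
    · exact Or.inr h
    · rw [h] at hw3; omega
  intro u hu hu3
  have hqm := hmem q hpq hq
  have hrm := hmem r hpr hr
  have hum := hmem u hu hu3
  rcases hqm with h1 | h1 <;> rcases hrm with h2 | h2 <;> rcases hum with h3 | h3 <;>
    simp_all <;> tauto

/-- structure of a white vertex -/
lemma LW {w : V} (hw : nd G w = 2) : ∃ p q : V,
    G.Adj w p ∧ G.Adj w q ∧ p ≠ q ∧ ¬ G.Adj p q ∧ (nd G p = 3 ∨ nd G q = 3) ∧
    {u | G.Adj w u} = {p, q} := by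
  obtain ⟨p, q, hpq, hN⟩ := nd_eq_two hw
  have hp : G.Adj w p := by rw [Set.ext_iff] at hN; exact (hN p).mpr (Or.inl rfl)
  have hq : G.Adj w q := by rw [Set.ext_iff] at hN; exact (hN q).mpr (Or.inr rfl)
  exact ⟨p, q, hp, hq, hpq, R2a w p q hp hq hpq hw, R2b w p q hp hq hpq hw, hN⟩

/-- a white vertex has at most one white neighbor -/
lemma white_white_unique {w z1 z2 : V} (hw : nd G w = 2) (h1 : G.Adj w z1) (h2 : G.Adj w z2)
    (hz1 : nd G z1 = 2) (hz2 : nd G z2 = 2) : z1 = z2 := by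
  obtain ⟨p, q, hp, hq, hpq, hnadj, hor, hN⟩ := LW hyp R1 R2a R2b hw
  have hm1 : z1 ∈ ({p, q} : Set V) := hN ▸ h1
  have hm2 : z2 ∈ ({p, q} : Set V) := hN ▸ h2
  rcases hor with h3 | h3
  · have e1 : z1 = q := by
      rcases hm1 with h | h
      · rw [h] at hz1; omega
      · exact h
    have e2 : z2 = q := by
      rcases hm2 with h | h
      · rw [h] at hz2; omega
      · exact h
    rw [e1, e2]
  · have e1 : z1 = p := by
      rcases hm1 with h | h
      · exact h
      · rw [h] at hz1; omega
    have e2 : z2 = p := by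
      rcases hm2 with h | h
      · exact h
      · rw [h] at hz2; omega
    rw [e1, e2]

/-- the far endpoint of a white path out of a black vertex is unique -/
lemma matched_unique {p z1 z2 u1 u2 : V} (hp : nd G p = 3)
    (hz1 : nd G z1 = 2) (hz2 : nd G z2 = 2)
    (h1 : G.Adj p z1) (h2 : G.Adj z1 u1) (h3 : G.Adj p z2) (h4 : G.Adj z2 u2)
    (hu1 : u1 ≠ p) (hu2 : u2 ≠ p) : u1 = u2 := by
  have hz12 : z1 = z2 := white_nbr_unique hyp R1 R2a R2b hp h1 h3 hz1 hz2
  subst hz12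
  obtain ⟨a, b, hab, hN⟩ := nd_eq_two hz1
  have hma : p ∈ ({a, b} : Set V) := hN ▸ h1.symm
  have hm1 : u1 ∈ ({a, b} : Set V) := hN ▸ h2
  have hm2 : u2 ∈ ({a, b} : Set V) := hN ▸ h4
  rcases hma with h | h <;> subst h
  · rcases hm1 with h | h
    · exact absurd h hu1
    · rcases hm2 with h' | h'
      · exact absurd h' hu2
      · rw [h, h']
  · rcases hm1 with h | h
    · rcases hm2 with h' | h'
      · rw [h, h']
      · exact absurd h' hu2
    · exact absurd h hu1

/-- all neighbors of the white neighbors of `x` (other than `x`) are black,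
i.e. the white neighbor of `x` lies on a length-1 thread. -/
def PortFull (G : SimpleGraph V) (x : V) : Prop :=
  ∀ z u, G.Adj x z → nd G z = 2 → G.Adj z u → u ≠ x → nd G u = 3

omit hyp R1 R2a R2b in
lemma pick1 (P K : Finset (Fin 5)) (h : K.card + 1 ≤ P.card) : ∃ x, x ∈ P ∧ x ∉ K := by
  have hle : P.card - K.card ≤ (P \ K).card := Finset.le_card_sdiff K P
  have : 0 < (P \ K).card := by omega
  obtain ⟨x, hx⟩ := Finset.card_pos.mp this
  exact ⟨x, (Finset.mem_sdiff.mp hx).1, (Finset.mem_sdiff.mp hx).2⟩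

omit hyp R1 R2a R2b in
lemma exists_triple (P K0 K1 K2 : Finset (Fin 5))
    (h0 : K0.card + 1 ≤ P.card) (h1 : K1.card + 2 ≤ P.card) (h2 : K2.card + 3 ≤ P.card) :
    ∃ g0 g1 g2, g0 ∈ P ∧ g1 ∈ P ∧ g2 ∈ P ∧ g0 ∉ K0 ∧ g1 ∉ K1 ∧ g2 ∉ K2 ∧
      g0 ≠ g1 ∧ g0 ≠ g2 ∧ g1 ≠ g2 := by
  obtain ⟨g0, hg0P, hg0K⟩ := pick1 P K0 h0
  obtain ⟨g1, hg1P, hg1K⟩ := pick1 P (insert g0 K1) (by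
    have := Finset.card_insert_le g0 K1
    omega)
  obtain ⟨g2, hg2P, hg2K⟩ := pick1 P (insert g0 (insert g1 K2)) (by
    have h3 := Finset.card_insert_le g1 K2
    have h4 := Finset.card_insert_le g0 (insert g1 K2)
    omega)
  simp only [Finset.mem_insert, not_or] at hg1K hg2K
  exact ⟨g0, g1, g2, hg0P, hg1P, hg2P, hg0K, hg1K.2, hg2K.2.2,
    fun h => hg1K.1 h.symm, fun h => hg2K.1 h.symm, fun h => hg2K.2.1 h.symm⟩

/-- existence of the port labeling -/
lemma labeling : ∃ l : V → Fin 5,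
    (∀ x, nd G x = 3 → (l x ∈ ({0,1,2,3} : Finset (Fin 5)) ∧
      (l x = 3 → PortFull G x ∧ ∀ m, G.Adj x m → nd G m = 3 → PortFull G m))) ∧
    (∀ x y, nd G x = 3 → nd G y = 3 → x ≠ y →
      (G.Adj x y ∨ ∃ z, G.Adj x z ∧ G.Adj z y) → l x ≠ l y) := by
  classical
  have claim : ∀ S : Finset V, (∀ x ∈ S, nd G x = 3 ∧ ∀ u, G.Adj x u → nd G u = 3 → u ∈ S) →
      ∃ l : V → Fin 5,
      (∀ x ∈ S, (l x ∈ ({0,1,2,3} : Finset (Fin 5)) ∧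
        (l x = 3 → PortFull G x ∧ ∀ m, G.Adj x m → nd G m = 3 → PortFull G m))) ∧
      (∀ x ∈ S, ∀ y ∈ S, x ≠ y →
        (G.Adj x y ∨ ∃ z, G.Adj x z ∧ G.Adj z y) → l x ≠ l y) := by
    intro S
    induction S using Finset.strongInduction with
    | _ S ih =>
      intro hclosed
      rcases S.eq_empty_or_nonempty with rfl | ⟨x0, hx0S⟩
      · exact ⟨fun _ => 0, by simp, by simp⟩
      have hx03 : nd G x0 = 3 := (hclosed x0 hx0S).1
      obtain ⟨a, b, c, hxa, hxb, hxc, hab, ha3, hb3, hc2, hcnab, hac, hbc, hNx⟩ :=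
        LB hyp R1 R2a R2b hx03
      have haS : a ∈ S := (hclosed x0 hx0S).2 a hxa ha3
      have hbS : b ∈ S := (hclosed x0 hx0S).2 b hxb hb3
      have hx0a : x0 ≠ a := G.ne_of_adj hxa
      have hx0b : x0 ≠ b := G.ne_of_adj hxb
      have hnab : a ≠ b := G.ne_of_adj hab
      -- black neighbor structure
      have hBx0 : ∀ u, G.Adj x0 u → nd G u = 3 → u = a ∨ u = b := by
        intro u hu hu3
        have : u ∈ ({a, b, c} : Set V) := hNx ▸ hu
        rcases this with h | h | h
        · exact Or.inl h
        · exact Or.inr h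
        · rw [h] at hu3; omega
      have hBa : ∀ u, G.Adj a u → nd G u = 3 → u = x0 ∨ u = b :=
        black_nbrs_pair hyp R1 R2a R2b ha3 hx03 hb3 hxa.symm hab hx0b
      have hBb : ∀ u, G.Adj b u → nd G u = 3 → u = x0 ∨ u = a :=
        black_nbrs_pair hyp R1 R2a R2b hb3 hx03 ha3 hxb.symm hab.symm hx0a
      -- the reduced set
      set S' := S \ {x0, a, b} with hS'def
      have hS'mem : ∀ u, u ∈ S' ↔ u ∈ S ∧ u ≠ x0 ∧ u ≠ a ∧ u ≠ b := by
        intro u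
        simp [hS'def, and_assoc]
      have hS'sub : S' ⊂ S := by
        refine (Finset.ssubset_iff_of_subset (Finset.sdiff_subset)).mpr ⟨x0, hx0S, ?_⟩
        simp [hS'def]
      have hS'closed : ∀ x ∈ S', nd G x = 3 ∧ ∀ u, G.Adj x u → nd G u = 3 → u ∈ S' := by
        intro u huS'
        obtain ⟨huS, hux0, hua, hub⟩ := (hS'mem u).mp huS'
        refine ⟨(hclosed u huS).1, fun w hw hw3 => ?_⟩
        have hwS : w ∈ S := (hclosed u huS).2 w hw hw3
        rw [hS'mem]
        refine ⟨hwS, ?_, ?_, ?_⟩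
        · rintro rfl
          rcases hBx0 u hw.symm (hclosed u huS).1 with h | h
          · exact hua h
          · exact hub h
        · rintro rfl
          rcases hBa u hw.symm (hclosed u huS).1 with h | h
          · exact hux0 h
          · exact hub h
        · rintro rfl
          rcases hBb u hw.symm (hclosed u huS).1 with h | h
          · exact hux0 h
          · exact hua h
      obtain ⟨l', hP1', hP2'⟩ := ih S' hS'sub hS'closed
      -- forbidden color sets
      set F : V → Finset (Fin 5) :=
        fun p => (S'.filter (fun u => ∃ z, nd G z = 2 ∧ G.Adj p z ∧ G.Adj z u)).image l'
        with hFdef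
      have hFcard : ∀ p, nd G p = 3 → p ∉ S' → (F p).card ≤ 1 := by
        intro p hp3 hpS'
        refine le_trans (Finset.card_image_le) (Finset.card_le_one.mpr ?_)
        intro u1 hu1 u2 hu2
        simp only [Finset.mem_filter] at hu1 hu2
        obtain ⟨hu1S, z1, hz1w, hpz1, hz1u⟩ := hu1
        obtain ⟨hu2S, z2, hz2w, hpz2, hz2u⟩ := hu2
        exact matched_unique hyp R1 R2a R2b hp3 hz1w hz2w hpz1 hz1u hpz2 hz2u
          (fun h => hpS' (h ▸ hu1S)) (fun h => hpS' (h ▸ hu2S))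
      have hx0S' : x0 ∉ S' := by simp [hS'def]
      have haS' : a ∉ S' := by simp [hS'def]
      have hbS' : b ∉ S' := by simp [hS'def]
      -- if a port is not full, it has no constraint
      have hFempty : ∀ p, nd G p = 3 → p ∉ S' → ¬ PortFull G p → F p = ∅ := by
        intro p hp3 hpS' hnf
        rw [Finset.eq_empty_iff_forall_notMem]
        intro col hcol
        simp only [hFdef, Finset.mem_image, Finset.mem_filter] at hcol
        obtain ⟨u, ⟨huS', z, hzw, hpz, hzu⟩, _⟩ := hcol
        -- u is black; but the white z of p has a non-black other neighbor by ¬PortFull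
        rw [PortFull] at hnf
        push_neg at hnf
        obtain ⟨z', u', hpz', hz'w, hz'u', hu'p, hu'3⟩ := hnf
        have hzz' : z = z' := white_nbr_unique hyp R1 R2a R2b hp3 hpz hpz' hzw hz'w
        subst hzz'
        have hu3 : nd G u = 3 := (hS'closed u huS').1
        have hup : u ≠ p := fun h => hpS' (h ▸ huS')
        have : u = u' := by
          obtain ⟨pp, qq, hppq, hNz⟩ := nd_eq_two hzw
          have h1 : u ∈ ({pp, qq} : Set V) := hNz ▸ hzu
          have h2 : u' ∈ ({pp, qq} : Set V) := hNz ▸ hz'u'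
          have h3 : p ∈ ({pp, qq} : Set V) := hNz ▸ hpz.symm
          rcases h3 with h | h <;> subst h
          · rcases h1 with h | h
            · exact absurd h hup
            · rcases h2 with h' | h'
              · exact absurd h' hu'p
              · rw [h, h']
          · rcases h1 with h | h
            · rcases h2 with h' | h'
              · rw [h, h']
              · exact absurd h' hu'p
            · exact absurd h hup
        rw [this] at hu3
        exact hu'3 hu3
      -- symmetry of closeness
      have hcloseS : ∀ x y : V, (G.Adj x y ∨ ∃ z, G.Adj x z ∧ G.Adj z y) →
          (G.Adj y x ∨ ∃ z, G.Adj y z ∧ G.Adj z x) := by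
        rintro x y (h | ⟨z, h1, h2⟩)
        · exact Or.inl h.symm
        · exact Or.inr ⟨z, h2.symm, h1.symm⟩
      have hcard4 : ({0,1,2,3} : Finset (Fin 5)).card = 4 := by decide
      have hcard3 : ({0,1,2} : Finset (Fin 5)).card = 3 := by decide
      have h012sub : ({0,1,2} : Finset (Fin 5)) ⊆ {0,1,2,3} := by decide
      have h3not : (3 : Fin 5) ∉ ({0,1,2} : Finset (Fin 5)) := by decide
      have hcFx0 := hFcard x0 hx03 hx0S'
      have hcFa := hFcard a ha3 haS'
      have hcFb := hFcard b hb3 hbS'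
      -- construct the three labels
      have hexists : ∃ gx ga gb : Fin 5,
          gx ∈ ({0,1,2,3} : Finset (Fin 5)) ∧ ga ∈ ({0,1,2,3} : Finset (Fin 5)) ∧
          gb ∈ ({0,1,2,3} : Finset (Fin 5)) ∧
          gx ∉ F x0 ∧ ga ∉ F a ∧ gb ∉ F b ∧
          gx ≠ ga ∧ gx ≠ gb ∧ ga ≠ gb ∧
          ((gx = 3 ∨ ga = 3 ∨ gb = 3) → PortFull G x0 ∧ PortFull G a ∧ PortFull G b) := by
        by_cases hfx : PortFull G x0
        · by_cases hfa : PortFull G a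
          · by_cases hfb : PortFull G b
            · obtain ⟨g0, g1, g2, m0, m1, m2, k0, k1, k2, d01, d02, d12⟩ :=
                exists_triple {0,1,2,3} (F x0) (F a) (F b)
                  (by omega) (by omega) (by omega)
              exact ⟨g0, g1, g2, m0, m1, m2, k0, k1, k2, d01, d02, d12,
                fun _ => ⟨hfx, hfa, hfb⟩⟩
            · have hFb0 : F b = ∅ := hFempty b hb3 hbS' hfb
              obtain ⟨g0, g1, g2, m0, m1, m2, k0, k1, k2, d01, d02, d12⟩ :=
                exists_triple {0,1,2} (F x0) (F a) ∅
                  (by omega) (by omega) (by simp only [Finset.card_empty]; omega)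
              refine ⟨g0, g1, g2, h012sub m0, h012sub m1, h012sub m2, k0, k1,
                by rw [hFb0]; exact Finset.notMem_empty g2, d01, d02, d12, ?_⟩
              rintro (h | h | h)
              · exact absurd (h ▸ m0) h3not
              · exact absurd (h ▸ m1) h3not
              · exact absurd (h ▸ m2) h3not
          · have hFa0 : F a = ∅ := hFempty a ha3 haS' hfa
            obtain ⟨g0, g1, g2, m0, m1, m2, k0, k1, k2, d01, d02, d12⟩ :=
              exists_triple {0,1,2} (F x0) (F b) ∅
                (by omega) (by omega) (by simp only [Finset.card_empty]; omega)
            refine ⟨g0, g2, g1, h012sub m0, h012sub m2, h012sub m1, k0,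
              by rw [hFa0]; exact Finset.notMem_empty g2, k1,
              d02, d01, fun h => d12 h.symm, ?_⟩
            rintro (h | h | h)
            · exact absurd (h ▸ m0) h3not
            · exact absurd (h ▸ m2) h3not
            · exact absurd (h ▸ m1) h3not
        · have hFx00 : F x0 = ∅ := hFempty x0 hx03 hx0S' hfx
          obtain ⟨g0, g1, g2, m0, m1, m2, k0, k1, k2, d01, d02, d12⟩ :=
            exists_triple {0,1,2} (F a) (F b) ∅
              (by omega) (by omega) (by simp only [Finset.card_empty]; omega)
          refine ⟨g2, g0, g1, h012sub m2, h012sub m0, h012sub m1,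
            by rw [hFx00]; exact Finset.notMem_empty g2, k0, k1,
            fun h => d02 h.symm, fun h => d12 h.symm, d01, ?_⟩
          rintro (h | h | h)
          · exact absurd (h ▸ m2) h3not
          · exact absurd (h ▸ m0) h3not
          · exact absurd (h ▸ m1) h3not
      obtain ⟨gx, ga, gb, hgxP, hgaP, hgbP, hgxF, hgaF, hgbF, dxa, dxb, dab, hrule⟩ := hexists
      -- the new labeling
      refine ⟨fun w => if w = x0 then gx else if w = a then ga else if w = b then gb else l' w,
        ?_, ?_⟩
      all_goals {
        have hlx0 : (fun w => if w = x0 then gx else if w = a then ga else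
            if w = b then gb else l' w) x0 = gx := by simp
        have hla : (fun w => if w = x0 then gx else if w = a then ga else
            if w = b then gb else l' w) a = ga := by simp [Ne.symm hx0a]
        have hlb : (fun w => if w = x0 then gx else if w = a then ga else
            if w = b then gb else l' w) b = gb := by simp [Ne.symm hx0b, Ne.symm hnab]
        have hlS' : ∀ u ∈ S', (fun w => if w = x0 then gx else if w = a then ga else
            if w = b then gb else l' w) u = l' u := by
          intro u huS'
          obtain ⟨_, h1, h2, h3⟩ := (hS'mem u).mp huS'
          simp [h1, h2, h3]
        have hSsplit : ∀ u ∈ S, u = x0 ∨ u = a ∨ u = b ∨ u ∈ S' := by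
          intro u huS
          by_cases h1 : u = x0
          · exact Or.inl h1
          by_cases h2 : u = a
          · exact Or.inr (Or.inl h2)
          by_cases h3 : u = b
          · exact Or.inr (Or.inr (Or.inl h3))
          · exact Or.inr (Or.inr (Or.inr ((hS'mem u).mpr ⟨huS, h1, h2, h3⟩)))
        -- rule data for new ports
        have hrulex : gx = 3 → PortFull G x0 ∧ ∀ m, G.Adj x0 m → nd G m = 3 → PortFull G m := by
          intro h3
          obtain ⟨f0, f1, f2⟩ := hrule (Or.inl h3)
          refine ⟨f0, fun m hm hm3 => ?_⟩
          rcases hBx0 m hm hm3 with h | h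
          · exact h ▸ f1
          · exact h ▸ f2
        have hrulea : ga = 3 → PortFull G a ∧ ∀ m, G.Adj a m → nd G m = 3 → PortFull G m := by
          intro h3
          obtain ⟨f0, f1, f2⟩ := hrule (Or.inr (Or.inl h3))
          refine ⟨f1, fun m hm hm3 => ?_⟩
          rcases hBa m hm hm3 with h | h
          · exact h ▸ f0
          · exact h ▸ f2
        have hruleb : gb = 3 → PortFull G b ∧ ∀ m, G.Adj b m → nd G m = 3 → PortFull G m := by
          intro h3
          obtain ⟨f0, f1, f2⟩ := hrule (Or.inr (Or.inr h3))
          refine ⟨f2, fun m hm hm3 => ?_⟩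
          rcases hBb m hm hm3 with h | h
          · exact h ▸ f0
          · exact h ▸ f1
        -- the crossing lemma: a new port vs an old vertex
        have hcross : ∀ p gp, ((p = x0 ∧ gp = gx) ∨ (p = a ∧ gp = ga) ∨ (p = b ∧ gp = gb)) →
            ∀ y ∈ S', (G.Adj p y ∨ ∃ z, G.Adj p z ∧ G.Adj z y) → gp ≠ l' y := by
          intro p gp hsel y hyS' hclose
          have hy3 : nd G y = 3 := (hS'closed y hyS').1
          have hyx0 : y ≠ x0 := ((hS'mem y).mp hyS').2.1
          have hya : y ≠ a := ((hS'mem y).mp hyS').2.2.1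
          have hyb : y ≠ b := ((hS'mem y).mp hyS').2.2.2
          have hp3 : nd G p = 3 := by
            rcases hsel with ⟨h, _⟩ | ⟨h, _⟩ | ⟨h, _⟩ <;> rw [h] <;> assumption
          have hBp : ∀ u, G.Adj p u → nd G u = 3 → u = x0 ∨ u = a ∨ u = b := by
            intro u hu hu3
            rcases hsel with ⟨h, _⟩ | ⟨h, _⟩ | ⟨h, _⟩ <;> subst h
            · rcases hBx0 u hu hu3 with h | h
              · exact Or.inr (Or.inl h)
              · exact Or.inr (Or.inr h)
            · rcases hBa u hu hu3 with h | h
              · exact Or.inl h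
              · exact Or.inr (Or.inr h)
            · rcases hBb u hu hu3 with h | h
              · exact Or.inl h
              · exact Or.inr (Or.inl h)
          rcases hclose with hadj | ⟨z, hz1, hz2⟩
          · rcases hBp y hadj hy3 with h | h | h
            · exact absurd h hyx0
            · exact absurd h hya
            · exact absurd h hyb
          · rcases CL1 hyp R1 R2a R2b z with hz2' | hz3
            · -- z white: y is a matched partner, so l' y ∈ F p
              have hymem : y ∈ S'.filter (fun u => ∃ z, nd G z = 2 ∧ G.Adj p z ∧ G.Adj z u) := by
                rw [Finset.mem_filter]
                exact ⟨hyS', z, hz2', hz1, hz2⟩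
              have hmem : l' y ∈ F p := Finset.mem_image_of_mem l' hymem
              intro heq
              rcases hsel with ⟨h, hg⟩ | ⟨h, hg⟩ | ⟨h, hg⟩ <;> subst h
              · rw [hg] at heq
                rw [← heq] at hmem
                exact hgxF hmem
              · rw [hg] at heq
                rw [← heq] at hmem
                exact hgaF hmem
              · rw [hg] at heq
                rw [← heq] at hmem
                exact hgbF hmem
            · -- z black: z is a mate of p, and y a mate of z: all inside the triangle
              have hzm : z = x0 ∨ z = a ∨ z = b := hBp z hz1 hz3
              have hym : y = x0 ∨ y = a ∨ y = b := by
                rcases hzm with h | h | h <;> subst h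
                · rcases hBx0 y hz2 hy3 with h | h
                  · exact Or.inr (Or.inl h)
                  · exact Or.inr (Or.inr h)
                · rcases hBa y hz2 hy3 with h | h
                  · exact Or.inl h
                  · exact Or.inr (Or.inr h)
                · rcases hBb y hz2 hy3 with h | h
                  · exact Or.inl h
                  · exact Or.inr (Or.inl h)
              rcases hym with h | h | h
              · exact absurd h hyx0
              · exact absurd h hya
              · exact absurd h hyb
        first
        | -- P1
          (intro x hxS
           rcases hSsplit x hxS with h | h | h | h
           · subst h
             rw [hlx0]
             exact ⟨hgxP, hrulex⟩
           · subst h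
             rw [hla]
             exact ⟨hgaP, hrulea⟩
           · subst h
             rw [hlb]
             exact ⟨hgbP, hruleb⟩
           · rw [hlS' x h]
             exact hP1' x h)
        | -- P2
          (intro x hxS y hyS hne hclose
           rcases hSsplit x hxS with hx | hx | hx | hxS'
           · rw [hx] at hclose hne ⊢
             rcases hSsplit y hyS with hy | hy | hy | hyS'
             · rw [hy] at hne; exact absurd rfl hne
             · rw [hy] at hne hclose ⊢; rw [hlx0, hla]; exact dxa
             · rw [hy] at hne hclose ⊢; rw [hlx0, hlb]; exact dxb
             · rw [hlx0, hlS' y hyS']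
               exact hcross x0 gx (Or.inl ⟨rfl, rfl⟩) y hyS' hclose
           · rw [hx] at hclose hne ⊢
             rcases hSsplit y hyS with hy | hy | hy | hyS'
             · rw [hy] at hne hclose ⊢; rw [hla, hlx0]; exact dxa.symm
             · rw [hy] at hne; exact absurd rfl hne
             · rw [hy] at hne hclose ⊢; rw [hla, hlb]; exact dab
             · rw [hla, hlS' y hyS']
               exact hcross a ga (Or.inr (Or.inl ⟨rfl, rfl⟩)) y hyS' hclose
           · rw [hx] at hclose hne ⊢
             rcases hSsplit y hyS with hy | hy | hy | hyS'
             · rw [hy] at hne hclose ⊢; rw [hlb, hlx0]; exact dxb.symm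
             · rw [hy] at hne hclose ⊢; rw [hlb, hla]; exact dab.symm
             · rw [hy] at hne; exact absurd rfl hne
             · rw [hlb, hlS' y hyS']
               exact hcross b gb (Or.inr (Or.inr ⟨rfl, rfl⟩)) y hyS' hclose
           · rcases hSsplit y hyS with hy | hy | hy | hyS'
             · rw [hy] at hne hclose ⊢
               rw [hlS' x hxS', hlx0]
               exact (hcross x0 gx (Or.inl ⟨rfl, rfl⟩) x hxS' (hcloseS x x0 hclose)).symm
             · rw [hy] at hne hclose ⊢
               rw [hlS' x hxS', hla]
               exact (hcross a ga (Or.inr (Or.inl ⟨rfl, rfl⟩)) x hxS' (hcloseS x a hclose)).symm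
             · rw [hy] at hne hclose ⊢
               rw [hlS' x hxS', hlb]
               exact (hcross b gb (Or.inr (Or.inr ⟨rfl, rfl⟩)) x hxS' (hcloseS x b hclose)).symm
             · rw [hlS' x hxS', hlS' y hyS']
               exact hP2' x hxS' y hyS' hne hclose)
      }
  obtain ⟨l, hl1, hl2⟩ := claim (Finset.univ.filter (fun u => nd G u = 3)) (by
    intro x hx
    rw [Finset.mem_filter] at hx
    exact ⟨hx.2, fun u hu hu3 => Finset.mem_filter.mpr ⟨Finset.mem_univ u, hu3⟩⟩)
  refine ⟨l, fun x hx3 => hl1 x (Finset.mem_filter.mpr ⟨Finset.mem_univ x, hx3⟩), ?_⟩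
  intro x y hx3 hy3 hne hclose
  exact hl2 x (Finset.mem_filter.mpr ⟨Finset.mem_univ x, hx3⟩)
    y (Finset.mem_filter.mpr ⟨Finset.mem_univ y, hy3⟩) hne hclose

/-- the terminal case: no reducible vertex, explicit coloring -/
lemma clean_case : ∃ c : V → Fin 5, Good G c := by
  classical
  obtain ⟨l, hl1, hl2⟩ := labeling hyp R1 R2a R2b
  let e := Fintype.equivFin V
  set c : V → Fin 5 := fun u =>
    if _hb : nd G u = 3 then l u
    else if hw : ∃ z, G.Adj u z ∧ nd G z = 2 then
      (if (e u : ℕ) < (e (Classical.choose hw) : ℕ) then 3 else 4)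
    else 4 with hcdef
  have hcblack : ∀ u, nd G u = 3 → c u = l u := by
    intro u hu
    simp only [hcdef, dif_pos hu]
  have hcwhite : ∀ u, nd G u = 2 → c u = 3 ∨ c u = 4 := by
    intro u hu
    simp only [hcdef, dif_neg (by omega : ¬ nd G u = 3)]
    by_cases hw : ∃ z, G.Adj u z ∧ nd G z = 2
    · rw [dif_pos hw]
      by_cases hlt : (e u : ℕ) < (e (Classical.choose hw) : ℕ)
      · rw [if_pos hlt]; exact Or.inl rfl
      · rw [if_neg hlt]; exact Or.inr rfl
    · rw [dif_neg hw]; exact Or.inr rfl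
  -- a black vertex colored like a white one: impossible when close
  have key23 : ∀ u w : V, nd G u = 3 → nd G w = 2 → c u = c w →
      (G.Adj u w ∨ ∃ z, G.Adj u z ∧ G.Adj z w) → False := by
    intro u w hu3 hw2 heq hclose
    rw [hcblack u hu3] at heq
    have hmem : l u ∈ ({0,1,2,3} : Finset (Fin 5)) := (hl1 u hu3).1
    by_cases hw : ∃ z, G.Adj w z ∧ nd G z = 2
    · set z0 := Classical.choose hw with hz0def
      obtain ⟨hwz0, hz0w⟩ := Classical.choose_spec hw
      rw [← hz0def] at hwz0 hz0w
      by_cases hlt : (e w : ℕ) < (e z0 : ℕ)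
      · -- c w = 3
        have hcw : c w = 3 := by
          simp only [hcdef, dif_neg (by omega : ¬ nd G w = 3), dif_pos hw]
          rw [← hz0def, if_pos hlt]
        rw [hcw] at heq
        obtain ⟨hPu, hPm⟩ := (hl1 u hu3).2 heq
        have hz0u : z0 ≠ u := by
          intro h
          rw [h] at hz0w
          omega
        rcases hclose with hadj | ⟨z, hz1, hz2⟩
        · have := hPu w z0 hadj hw2 hwz0 hz0u
          omega
        · rcases CL1 hyp R1 R2a R2b z with hz2' | hz3
          · have hwu : w ≠ u := by intro h; rw [h] at hw2; omega
            have := hPu z w hz1 hz2' hz2 hwu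
            omega
          · have hPz : PortFull G z := hPm z hz1 hz3
            have hz0z : z0 ≠ z := by intro h; rw [h] at hz0w; omega
            have := hPz w z0 hz2 hw2 hwz0 hz0z
            omega
      · -- c w = 4
        have hcw : c w = 4 := by
          simp only [hcdef, dif_neg (by omega : ¬ nd G w = 3), dif_pos hw]
          rw [← hz0def, if_neg hlt]
        rw [hcw] at heq
        rw [heq] at hmem
        exact absurd hmem (by decide)
    · have hcw : c w = 4 := by
        simp only [hcdef, dif_neg (by omega : ¬ nd G w = 3), dif_neg hw]
      rw [hcw] at heq
      rw [heq] at hmem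
      exact absurd hmem (by decide)
  refine ⟨c, good_of_no_close ?_⟩
  intro u w hne heq hclose
  have hcloseS : (G.Adj w u ∨ ∃ z, G.Adj w z ∧ G.Adj z u) := by
    rcases hclose with h | ⟨z, h1, h2⟩
    · exact Or.inl h.symm
    · exact Or.inr ⟨z, h2.symm, h1.symm⟩
  rcases CL1 hyp R1 R2a R2b u with hu2 | hu3
  · rcases CL1 hyp R1 R2a R2b w with hw2 | hw3
    · -- both white
      rcases hclose with hadj | ⟨z, hz1, hz2⟩
      · -- adjacent whites: partners, distinguished by the order
        have hwu : ∃ z, G.Adj u z ∧ nd G z = 2 := ⟨w, hadj, hw2⟩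
        have hww : ∃ z, G.Adj w z ∧ nd G z = 2 := ⟨u, hadj.symm, hu2⟩
        have hzu : Classical.choose hwu = w :=
          white_white_unique hyp R1 R2a R2b hu2 (Classical.choose_spec hwu).1 hadj
            (Classical.choose_spec hwu).2 hw2
        have hzw : Classical.choose hww = u :=
          white_white_unique hyp R1 R2a R2b hw2 (Classical.choose_spec hww).1 hadj.symm
            (Classical.choose_spec hww).2 hu2
        have hcu : c u = if (e u : ℕ) < (e w : ℕ) then 3 else 4 := by
          simp only [hcdef, dif_neg (by omega : ¬ nd G u = 3), dif_pos hwu, hzu]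
        have hcw : c w = if (e w : ℕ) < (e u : ℕ) then 3 else 4 := by
          simp only [hcdef, dif_neg (by omega : ¬ nd G w = 3), dif_pos hww, hzw]
        have hval : (e u : ℕ) ≠ (e w : ℕ) := by
          intro h
          exact hne (e.injective (Fin.val_injective h))
        rcases Nat.lt_trichotomy (e u : ℕ) (e w : ℕ) with h | h | h
        · rw [hcu, hcw, if_pos h, if_neg (by omega)] at heq
          exact absurd heq (by decide)
        · exact hval h
        · rw [hcu, hcw, if_neg (by omega), if_pos h] at heq
          exact absurd heq (by decide)
      · rcases CL1 hyp R1 R2a R2b z with hz2' | hz3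
        · exact hne (white_white_unique hyp R1 R2a R2b hz2' hz1.symm hz2 hu2 hw2)
        · exact hne (white_nbr_unique hyp R1 R2a R2b hz3 hz1.symm hz2 hu2 hw2)
    · exact key23 w u hw3 hu2 heq.symm hcloseS
  · rcases CL1 hyp R1 R2a R2b w with hw2 | hw3
    · exact key23 u w hu3 hw2 heq hclose
    · -- both black
      rw [hcblack u hu3, hcblack w hw3] at heq
      exact hl2 u w hu3 hw3 hne hclose heq

end Clean

universe u

theorem main : ∀ (n : ℕ) {W : Type u} [Fintype W] (G : SimpleGraph W),
    Fintype.card W = n → Hyp G → ∃ c : W → Fin 5, Good G c := by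
  intro n
  induction n using Nat.strong_induction_on with
  | _ n ih =>
    intro W _ G hcard hyp
    classical
    by_cases h1 : ∃ v, nd G v ≤ 1
    · obtain ⟨v, hv⟩ := h1
      exact red1 hyp hv
        (ih _ (by rw [← hcard]; exact card_del v) (del G v) rfl (del_hyp hyp v))
    by_cases h2a : ∃ v x y, nd G v = 2 ∧ G.Adj v x ∧ G.Adj v y ∧ x ≠ y ∧ G.Adj x y
    · obtain ⟨v, x, y, hnd, hvx, hvy, hxy, hadj⟩ := h2a
      exact red2a hyp hnd hvx hvy hxy hadj
        (ih _ (by rw [← hcard]; exact card_del v) (del G v) rfl (del_hyp hyp v))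
    by_cases h2b : ∃ v x y, nd G v = 2 ∧ G.Adj v x ∧ G.Adj v y ∧ x ≠ y ∧
        nd G x = 2 ∧ nd G y = 2
    · obtain ⟨v, x, y, hnd, hvx, hvy, hxy, hndx, hndy⟩ := h2b
      have hnxy : ¬ G.Adj x y := fun h => h2a ⟨v, x, y, hnd, hvx, hvy, hxy, h⟩
      exact red2b hnd hvx hvy hxy hnxy hndx hndy
        (ih _ (by rw [← hcard]; exact card_del v) (supp G v x y) rfl
          (supp_hyp hnd hvx hvy hxy hnxy hndx hndy hyp))
    · push_neg at h1 h2a h2b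
      refine clean_case hyp (fun u => ?_) (fun u p q hup huq hpq hnd2 => ?_)
        (fun u p q hup huq hpq hnd2 => ?_)
      · have := h1 u
        omega
      · intro hadj
        exact (h2a u p q hnd2 hup huq hpq) hadj
      · have hne2 := h2b u p q hnd2 hup huq hpq
        have hb1 := hyp.1 p
        have hb2 := hyp.1 q
        have hc1 := h1 p
        have hc2 := h1 q
        omega

end PackingAux

/-- Every 2-saturated subcubic graph in which every 3-vertex lies on a triangle
admits a (2,2,2,2,2)-packing coloring. -/
theorem stmt_12 {V : Type*} [Fintype V] (G : SimpleGraph V) [DecidableRel G.Adj]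
    (hsub : Subcubic G) (hsat : Saturated G 2)
    (hgirth : ∀ v : V, G.degree v = 3 → ∃ a b : V, G.Adj v a ∧ G.Adj v b ∧ G.Adj a b) :
    ∃ c : V → Fin 5, IsPackingColoring G ![2, 2, 2, 2, 2] c := by
  classical
  have hdeg : ∀ v : V, PackingAux.nd G v = G.degree v := by
    intro v
    rw [PackingAux.nd_def]
    have hset : {u | G.Adj v u} = ↑(G.neighborFinset v) := by
      ext u
      simp [SimpleGraph.mem_neighborFinset]
    rw [hset, Set.ncard_coe_finset]
    rfl
  have hyp : PackingAux.Hyp G := by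
    refine ⟨fun v => ?_, fun v hv => ?_, fun v hv => ?_⟩
    · rw [hdeg]; exact hsub v
    · have hsetf : {u | G.Adj v u ∧ PackingAux.nd G u = 3} =
          ↑((G.neighborFinset v).filter (fun u => G.degree u = 3)) := by
        ext u
        simp [SimpleGraph.mem_neighborFinset, hdeg]
      rw [hsetf, Set.ncard_coe_finset]
      exact hsat v (by rw [← hdeg]; exact hv)
    · exact hgirth v (by rw [← hdeg]; exact hv)
  obtain ⟨c, hc⟩ := PackingAux.main (Fintype.card V) G rfl hyp
  refine ⟨c, fun u v hne heq hr => ?_⟩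
  have h2 := hc u v hne heq hr
  have hval : ∀ i : Fin 5, (![2, 2, 2, 2, 2] : Fin 5 → ℕ) i = 2 := by decide
  rw [hval (c u)]
  exact h2
end

section
/- The graph G_10, consisting of a 9-cycle v_1...v_9 with chords v_2 v_9, v_3 v_5, v_6 v_8 (so three triangles hanging on a 6-cycle), admits no (1,1,3,3)-packing coloring. -/
open SimpleGraph

/-- The graph 𝒢₁₀: a 9-cycle v₁…v₉ with chords v₂v₉, v₃v₅, v₆v₈. -/
def G10 : SimpleGraph (Fin 9) :=
  SimpleGraph.fromRel (fun u v =>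
    (u.val, v.val) ∈ [(0, 1), (1, 2), (2, 3), (3, 4), (4, 5), (5, 6), (6, 7),
      (7, 8), (8, 0), (1, 8), (2, 4), (5, 7)])

instance : DecidableRel G10.Adj := fun u v =>
  decidable_of_iff _ (SimpleGraph.fromRel_adj _ u v).symm

/-- A walk of length at most 3 between any two vertices of G10. -/
def walk3 : (u v : Fin 9) → { w : G10.Walk u v // w.length ≤ 3 }
  | 0, 0 => ⟨Walk.nil, by decide⟩
  | 0, 1 => ⟨Walk.cons (by decide : G10.Adj 0 1) (Walk.nil), by decide⟩
  | 0, 2 => ⟨Walk.cons (by decide : G10.Adj 0 1) (Walk.cons (by decide : G10.Adj 1 2) (Walk.nil)), by decide⟩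
  | 0, 3 => ⟨Walk.cons (by decide : G10.Adj 0 1) (Walk.cons (by decide : G10.Adj 1 2) (Walk.cons (by decide : G10.Adj 2 3) (Walk.nil))), by decide⟩
  | 0, 4 => ⟨Walk.cons (by decide : G10.Adj 0 1) (Walk.cons (by decide : G10.Adj 1 2) (Walk.cons (by decide : G10.Adj 2 4) (Walk.nil))), by decide⟩
  | 0, 5 => ⟨Walk.cons (by decide : G10.Adj 0 8) (Walk.cons (by decide : G10.Adj 8 7) (Walk.cons (by decide : G10.Adj 7 5) (Walk.nil))), by decide⟩
  | 0, 6 => ⟨Walk.cons (by decide : G10.Adj 0 8) (Walk.cons (by decide : G10.Adj 8 7) (Walk.cons (by decide : G10.Adj 7 6) (Walk.nil))), by decide⟩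
  | 0, 7 => ⟨Walk.cons (by decide : G10.Adj 0 8) (Walk.cons (by decide : G10.Adj 8 7) (Walk.nil)), by decide⟩
  | 0, 8 => ⟨Walk.cons (by decide : G10.Adj 0 8) (Walk.nil), by decide⟩
  | 1, 0 => ⟨Walk.cons (by decide : G10.Adj 1 0) (Walk.nil), by decide⟩
  | 1, 1 => ⟨Walk.nil, by decide⟩
  | 1, 2 => ⟨Walk.cons (by decide : G10.Adj 1 2) (Walk.nil), by decide⟩
  | 1, 3 => ⟨Walk.cons (by decide : G10.Adj 1 2) (Walk.cons (by decide : G10.Adj 2 3) (Walk.nil)), by decide⟩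
  | 1, 4 => ⟨Walk.cons (by decide : G10.Adj 1 2) (Walk.cons (by decide : G10.Adj 2 4) (Walk.nil)), by decide⟩
  | 1, 5 => ⟨Walk.cons (by decide : G10.Adj 1 8) (Walk.cons (by decide : G10.Adj 8 7) (Walk.cons (by decide : G10.Adj 7 5) (Walk.nil))), by decide⟩
  | 1, 6 => ⟨Walk.cons (by decide : G10.Adj 1 8) (Walk.cons (by decide : G10.Adj 8 7) (Walk.cons (by decide : G10.Adj 7 6) (Walk.nil))), by decide⟩
  | 1, 7 => ⟨Walk.cons (by decide : G10.Adj 1 8) (Walk.cons (by decide : G10.Adj 8 7) (Walk.nil)), by decide⟩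
  | 1, 8 => ⟨Walk.cons (by decide : G10.Adj 1 8) (Walk.nil), by decide⟩
  | 2, 0 => ⟨Walk.cons (by decide : G10.Adj 2 1) (Walk.cons (by decide : G10.Adj 1 0) (Walk.nil)), by decide⟩
  | 2, 1 => ⟨Walk.cons (by decide : G10.Adj 2 1) (Walk.nil), by decide⟩
  | 2, 2 => ⟨Walk.nil, by decide⟩
  | 2, 3 => ⟨Walk.cons (by decide : G10.Adj 2 3) (Walk.nil), by decide⟩
  | 2, 4 => ⟨Walk.cons (by decide : G10.Adj 2 4) (Walk.nil), by decide⟩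
  | 2, 5 => ⟨Walk.cons (by decide : G10.Adj 2 4) (Walk.cons (by decide : G10.Adj 4 5) (Walk.nil)), by decide⟩
  | 2, 6 => ⟨Walk.cons (by decide : G10.Adj 2 4) (Walk.cons (by decide : G10.Adj 4 5) (Walk.cons (by decide : G10.Adj 5 6) (Walk.nil))), by decide⟩
  | 2, 7 => ⟨Walk.cons (by decide : G10.Adj 2 1) (Walk.cons (by decide : G10.Adj 1 8) (Walk.cons (by decide : G10.Adj 8 7) (Walk.nil))), by decide⟩
  | 2, 8 => ⟨Walk.cons (by decide : G10.Adj 2 1) (Walk.cons (by decide : G10.Adj 1 8) (Walk.nil)), by decide⟩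
  | 3, 0 => ⟨Walk.cons (by decide : G10.Adj 3 2) (Walk.cons (by decide : G10.Adj 2 1) (Walk.cons (by decide : G10.Adj 1 0) (Walk.nil))), by decide⟩
  | 3, 1 => ⟨Walk.cons (by decide : G10.Adj 3 2) (Walk.cons (by decide : G10.Adj 2 1) (Walk.nil)), by decide⟩
  | 3, 2 => ⟨Walk.cons (by decide : G10.Adj 3 2) (Walk.nil), by decide⟩
  | 3, 3 => ⟨Walk.nil, by decide⟩
  | 3, 4 => ⟨Walk.cons (by decide : G10.Adj 3 4) (Walk.nil), by decide⟩
  | 3, 5 => ⟨Walk.cons (by decide : G10.Adj 3 4) (Walk.cons (by decide : G10.Adj 4 5) (Walk.nil)), by decide⟩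
  | 3, 6 => ⟨Walk.cons (by decide : G10.Adj 3 4) (Walk.cons (by decide : G10.Adj 4 5) (Walk.cons (by decide : G10.Adj 5 6) (Walk.nil))), by decide⟩
  | 3, 7 => ⟨Walk.cons (by decide : G10.Adj 3 4) (Walk.cons (by decide : G10.Adj 4 5) (Walk.cons (by decide : G10.Adj 5 7) (Walk.nil))), by decide⟩
  | 3, 8 => ⟨Walk.cons (by decide : G10.Adj 3 2) (Walk.cons (by decide : G10.Adj 2 1) (Walk.cons (by decide : G10.Adj 1 8) (Walk.nil))), by decide⟩
  | 4, 0 => ⟨Walk.cons (by decide : G10.Adj 4 2) (Walk.cons (by decide : G10.Adj 2 1) (Walk.cons (by decide : G10.Adj 1 0) (Walk.nil))), by decide⟩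
  | 4, 1 => ⟨Walk.cons (by decide : G10.Adj 4 2) (Walk.cons (by decide : G10.Adj 2 1) (Walk.nil)), by decide⟩
  | 4, 2 => ⟨Walk.cons (by decide : G10.Adj 4 2) (Walk.nil), by decide⟩
  | 4, 3 => ⟨Walk.cons (by decide : G10.Adj 4 3) (Walk.nil), by decide⟩
  | 4, 4 => ⟨Walk.nil, by decide⟩
  | 4, 5 => ⟨Walk.cons (by decide : G10.Adj 4 5) (Walk.nil), by decide⟩
  | 4, 6 => ⟨Walk.cons (by decide : G10.Adj 4 5) (Walk.cons (by decide : G10.Adj 5 6) (Walk.nil)), by decide⟩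
  | 4, 7 => ⟨Walk.cons (by decide : G10.Adj 4 5) (Walk.cons (by decide : G10.Adj 5 7) (Walk.nil)), by decide⟩
  | 4, 8 => ⟨Walk.cons (by decide : G10.Adj 4 2) (Walk.cons (by decide : G10.Adj 2 1) (Walk.cons (by decide : G10.Adj 1 8) (Walk.nil))), by decide⟩
  | 5, 0 => ⟨Walk.cons (by decide : G10.Adj 5 7) (Walk.cons (by decide : G10.Adj 7 8) (Walk.cons (by decide : G10.Adj 8 0) (Walk.nil))), by decide⟩
  | 5, 1 => ⟨Walk.cons (by decide : G10.Adj 5 4) (Walk.cons (by decide : G10.Adj 4 2) (Walk.cons (by decide : G10.Adj 2 1) (Walk.nil))), by decide⟩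
  | 5, 2 => ⟨Walk.cons (by decide : G10.Adj 5 4) (Walk.cons (by decide : G10.Adj 4 2) (Walk.nil)), by decide⟩
  | 5, 3 => ⟨Walk.cons (by decide : G10.Adj 5 4) (Walk.cons (by decide : G10.Adj 4 3) (Walk.nil)), by decide⟩
  | 5, 4 => ⟨Walk.cons (by decide : G10.Adj 5 4) (Walk.nil), by decide⟩
  | 5, 5 => ⟨Walk.nil, by decide⟩
  | 5, 6 => ⟨Walk.cons (by decide : G10.Adj 5 6) (Walk.nil), by decide⟩
  | 5, 7 => ⟨Walk.cons (by decide : G10.Adj 5 7) (Walk.nil), by decide⟩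
  | 5, 8 => ⟨Walk.cons (by decide : G10.Adj 5 7) (Walk.cons (by decide : G10.Adj 7 8) (Walk.nil)), by decide⟩
  | 6, 0 => ⟨Walk.cons (by decide : G10.Adj 6 7) (Walk.cons (by decide : G10.Adj 7 8) (Walk.cons (by decide : G10.Adj 8 0) (Walk.nil))), by decide⟩
  | 6, 1 => ⟨Walk.cons (by decide : G10.Adj 6 7) (Walk.cons (by decide : G10.Adj 7 8) (Walk.cons (by decide : G10.Adj 8 1) (Walk.nil))), by decide⟩
  | 6, 2 => ⟨Walk.cons (by decide : G10.Adj 6 5) (Walk.cons (by decide : G10.Adj 5 4) (Walk.cons (by decide : G10.Adj 4 2) (Walk.nil))), by decide⟩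
  | 6, 3 => ⟨Walk.cons (by decide : G10.Adj 6 5) (Walk.cons (by decide : G10.Adj 5 4) (Walk.cons (by decide : G10.Adj 4 3) (Walk.nil))), by decide⟩
  | 6, 4 => ⟨Walk.cons (by decide : G10.Adj 6 5) (Walk.cons (by decide : G10.Adj 5 4) (Walk.nil)), by decide⟩
  | 6, 5 => ⟨Walk.cons (by decide : G10.Adj 6 5) (Walk.nil), by decide⟩
  | 6, 6 => ⟨Walk.nil, by decide⟩
  | 6, 7 => ⟨Walk.cons (by decide : G10.Adj 6 7) (Walk.nil), by decide⟩
  | 6, 8 => ⟨Walk.cons (by decide : G10.Adj 6 7) (Walk.cons (by decide : G10.Adj 7 8) (Walk.nil)), by decide⟩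
  | 7, 0 => ⟨Walk.cons (by decide : G10.Adj 7 8) (Walk.cons (by decide : G10.Adj 8 0) (Walk.nil)), by decide⟩
  | 7, 1 => ⟨Walk.cons (by decide : G10.Adj 7 8) (Walk.cons (by decide : G10.Adj 8 1) (Walk.nil)), by decide⟩
  | 7, 2 => ⟨Walk.cons (by decide : G10.Adj 7 8) (Walk.cons (by decide : G10.Adj 8 1) (Walk.cons (by decide : G10.Adj 1 2) (Walk.nil))), by decide⟩
  | 7, 3 => ⟨Walk.cons (by decide : G10.Adj 7 5) (Walk.cons (by decide : G10.Adj 5 4) (Walk.cons (by decide : G10.Adj 4 3) (Walk.nil))), by decide⟩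
  | 7, 4 => ⟨Walk.cons (by decide : G10.Adj 7 5) (Walk.cons (by decide : G10.Adj 5 4) (Walk.nil)), by decide⟩
  | 7, 5 => ⟨Walk.cons (by decide : G10.Adj 7 5) (Walk.nil), by decide⟩
  | 7, 6 => ⟨Walk.cons (by decide : G10.Adj 7 6) (Walk.nil), by decide⟩
  | 7, 7 => ⟨Walk.nil, by decide⟩
  | 7, 8 => ⟨Walk.cons (by decide : G10.Adj 7 8) (Walk.nil), by decide⟩
  | 8, 0 => ⟨Walk.cons (by decide : G10.Adj 8 0) (Walk.nil), by decide⟩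
  | 8, 1 => ⟨Walk.cons (by decide : G10.Adj 8 1) (Walk.nil), by decide⟩
  | 8, 2 => ⟨Walk.cons (by decide : G10.Adj 8 1) (Walk.cons (by decide : G10.Adj 1 2) (Walk.nil)), by decide⟩
  | 8, 3 => ⟨Walk.cons (by decide : G10.Adj 8 1) (Walk.cons (by decide : G10.Adj 1 2) (Walk.cons (by decide : G10.Adj 2 3) (Walk.nil))), by decide⟩
  | 8, 4 => ⟨Walk.cons (by decide : G10.Adj 8 1) (Walk.cons (by decide : G10.Adj 1 2) (Walk.cons (by decide : G10.Adj 2 4) (Walk.nil))), by decide⟩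
  | 8, 5 => ⟨Walk.cons (by decide : G10.Adj 8 7) (Walk.cons (by decide : G10.Adj 7 5) (Walk.nil)), by decide⟩
  | 8, 6 => ⟨Walk.cons (by decide : G10.Adj 8 7) (Walk.cons (by decide : G10.Adj 7 6) (Walk.nil)), by decide⟩
  | 8, 7 => ⟨Walk.cons (by decide : G10.Adj 8 7) (Walk.nil), by decide⟩
  | 8, 8 => ⟨Walk.nil, by decide⟩
lemma dist_le3 (u v : Fin 9) : G10.dist u v ≤ 3 :=
  le_trans (SimpleGraph.dist_le (walk3 u v).1) (walk3 u v).2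

lemma reach (u v : Fin 9) : G10.Reachable u v := (walk3 u v).1.reachable


/-- 𝒢₁₀ admits no (1,1,3,3)-packing coloring. -/
theorem stmt_18 : ¬ ∃ c : Fin 9 → Fin 4, IsPackingColoring G10 ![1, 1, 3, 3] c := by
  rintro ⟨c, h⟩
  have hs1 : ∀ i : Fin 4, (1:ℕ) ≤ ![1,1,3,3] i := by decide
  -- proper on edges
  have proper : ∀ u v : Fin 9, G10.Adj u v → c u ≠ c v := by
    intro u v hadj heq
    have hd : G10.dist u v = 1 := SimpleGraph.dist_eq_one_iff_adj.mpr hadj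
    have := h u v hadj.ne heq hadj.reachable
    have := hs1 (c u)
    omega
  -- colors 2 and 3 are each used at most once
  have uniq : ∀ u v : Fin 9, u ≠ v → c u = c v → c u ≠ 2 ∧ c u ≠ 3 := by
    intro u v hne heq
    have hlt := h u v hne heq (reach u v)
    have hle := dist_le3 u v
    constructor <;> intro hcu <;> rw [hcu] at hlt <;> simp at hlt <;> omega
  -- each triangle contains a vertex colored 2 or 3
  have tri : ∀ a b d : Fin 9, G10.Adj a b → G10.Adj b d → G10.Adj a d →
      ∃ x, (x = a ∨ x = b ∨ x = d) ∧ (c x = 2 ∨ c x = 3) := by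
    intro a b d hab hbd had
    have h1 := proper a b hab
    have h2 := proper b d hbd
    have h3 := proper a d had
    by_contra hc
    push_neg at hc
    obtain ⟨ha2, ha3⟩ := hc a (Or.inl rfl)
    obtain ⟨hb2, hb3⟩ := hc b (Or.inr (Or.inl rfl))
    obtain ⟨hd2, hd3⟩ := hc d (Or.inr (Or.inr rfl))
    have : ∀ i : Fin 4, i ≠ 2 → i ≠ 3 → i = 0 ∨ i = 1 := by decide
    rcases this _ ha2 ha3 with h|h <;> rcases this _ hb2 hb3 with h'|h' <;>
      rcases this _ hd2 hd3 with h''|h'' <;>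
      first
        | exact h1 (h.trans h'.symm)
        | exact h2 (h'.trans h''.symm)
        | exact h3 (h.trans h''.symm)
  obtain ⟨x, hx, hcx⟩ := tri 2 3 4 (by decide) (by decide) (by decide)
  obtain ⟨y, hy, hcy⟩ := tri 5 6 7 (by decide) (by decide) (by decide)
  obtain ⟨z, hz, hcz⟩ := tri 0 1 8 (by decide) (by decide) (by decide)
  have hxy : x ≠ y := by rcases hx with h|h|h <;> rcases hy with h'|h'|h' <;> simp [h, h']
  have hxz : x ≠ z := by rcases hx with h|h|h <;> rcases hz with h'|h'|h' <;> simp [h, h']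
  have hyz : y ≠ z := by rcases hy with h|h|h <;> rcases hz with h'|h'|h' <;> simp [h, h']
  rcases hcx with h1|h1 <;> rcases hcy with h2|h2 <;> rcases hcz with h3|h3 <;>
    first
      | exact (uniq x y hxy (h1.trans h2.symm)).1 h1
      | exact (uniq x y hxy (h1.trans h2.symm)).2 h1
      | exact (uniq x z hxz (h1.trans h3.symm)).1 h1
      | exact (uniq x z hxz (h1.trans h3.symm)).2 h1
      | exact (uniq y z hyz (h2.trans h3.symm)).1 h2
      | exact (uniq y z hyz (h2.trans h3.symm)).2 h2
end
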